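/- arXiv:2109.01260 — 3 statements merged into one kernel-verified Lean document; each statement's English description precedes it below -/
import Mathlib

section
/- Let Z be a separable metric space and suppose μ̃ is a Borel regular, locally finite outer measure on Z such that limsup_{r→0} μ̃(B(x,2r))/μ̃(B(x,r)) < ∞ for μ̃-a.e. x ∈ Z. Then μ̃ is a Vitali measure in Z. -/
open Set Metric MeasureTheory Filter ENNReal NNReal TopologicalSpace

noncomputable section

/-- A rectifiable curve parametrized by arc length: a `1`-Lipschitz map
`γ : [0, len] → X` such that the length (variation) of `γ` on `[0, t]` equals `t`. -/
structure Curve (X : Type*) [MetricSpace X] where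
  len : ℝ
  len_nonneg : 0 ≤ len
  toFun : ℝ → X
  lipschitz : LipschitzOnWith 1 toFun (Set.Icc 0 len)
  arclength : ∀ t ∈ Set.Icc (0 : ℝ) len,
    eVariationOn toFun (Set.Icc 0 t) = ENNReal.ofReal t

/-- The curve `γ` lies in the set `A`. -/
def Curve.In {X : Type*} [MetricSpace X] (γ : Curve X) (A : Set X) : Prop :=
  ∀ t ∈ Set.Icc (0 : ℝ) γ.len, γ.toFun t ∈ A

/-- The image of a curve. -/
def Curve.image {X : Type*} [MetricSpace X] (γ : Curve X) : Set X :=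
  γ.toFun '' Set.Icc (0 : ℝ) γ.len

/-- The curve integral `∫_γ ρ ds := ∫_0^{ℓ_γ} ρ(γ(s)) ds`. -/
def curveIntegralArc {X : Type*} [MetricSpace X] (ρ : X → ℝ≥0∞) (γ : Curve X) : ℝ≥0∞ :=
  ∫⁻ s in Set.Icc (0 : ℝ) γ.len, ρ (γ.toFun s)

/-- The `p`-modulus of a family of curves. -/
def pModulus {X : Type*} [MetricSpace X] [MeasurableSpace X] (p : ℝ) (μ : Measure X)
    (Γ : Set (Curve X)) : ℝ≥0∞ :=
  ⨅ (ρ : X → ℝ≥0∞) (_ : Measurable ρ) (_ : ∀ γ ∈ Γ, 1 ≤ curveIntegralArc ρ γ),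
    ∫⁻ x, ρ x ^ p ∂μ

/-- `g` is an upper gradient of `f` in `Ω`. -/
def IsUpperGradientOn {X Y : Type*} [MetricSpace X] [MetricSpace Y]
    (f : X → Y) (g : X → ℝ≥0∞) (Ω : Set X) : Prop :=
  ∀ γ : Curve X, γ.In Ω →
    edist (f (γ.toFun 0)) (f (γ.toFun γ.len)) ≤ curveIntegralArc g γ

/-- `g` is a `p`-weak upper gradient of `f` in `Ω`: the upper gradient inequality
holds for `p`-a.e. curve in `Ω`. -/
def IsWeakUpperGradientOn {X Y : Type*} [MetricSpace X] [MeasurableSpace X] [MetricSpace Y]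
    (p : ℝ) (μ : Measure X) (f : X → Y) (g : X → ℝ≥0∞) (Ω : Set X) : Prop :=
  pModulus p μ {γ : Curve X | γ.In Ω ∧
    ¬ edist (f (γ.toFun 0)) (f (γ.toFun γ.len)) ≤ curveIntegralArc g γ} = 0

/-- `f` belongs to the Dirichlet class `D^p(Ω; Y)`: it has an upper gradient in `L^p(Ω, μ)`. -/
def MemDirichlet {X Y : Type*} [MetricSpace X] [MeasurableSpace X] [MetricSpace Y]
    (p : ℝ) (μ : Measure X) (f : X → Y) (Ω : Set X) : Prop :=
  ∃ g : X → ℝ≥0∞, Measurable g ∧ IsUpperGradientOn f g Ω ∧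
    ∫⁻ x in Ω, g x ^ p ∂μ < ⊤

/-- `μt` is doubling with constant `Cd` within the open set `W`. -/
def DoublingWithinC {X : Type*} [MetricSpace X] [MeasurableSpace X]
    (μt : Measure X) (Cd : ℝ≥0) (W : Set X) : Prop :=
  ∀ (x : X) (r : ℝ), 0 < r → Metric.ball x r ⊆ W →
    0 < μt (Metric.ball x (2 * r)) ∧
      μt (Metric.ball x (2 * r)) ≤ Cd * μt (Metric.ball x r) ∧
      μt (Metric.ball x (2 * r)) < ⊤

/-- `μt` is doubling (with some constant) within the open set `W`. -/
def DoublingWithin {X : Type*} [MetricSpace X] [MeasurableSpace X]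
    (μt : Measure X) (W : Set X) : Prop :=
  ∃ Cd : ℝ≥0, DoublingWithinC μt Cd W

/-- `L_f(x,r) = sup { d_Y(f(y), f(x)) : y ∈ Ω, d(y,x) ≤ r }`. -/
def eL {X Y : Type*} [MetricSpace X] [MetricSpace Y]
    (f : X → Y) (Ω : Set X) (x : X) (r : ℝ) : ℝ≥0∞ :=
  ⨆ (y : X) (_ : y ∈ Ω) (_ : dist y x ≤ r), edist (f y) (f x)

/-- `l_f(x,r) = inf { d_Y(f(y), f(x)) : y ∈ Ω, d(y,x) ≥ r }`. -/
def el {X Y : Type*} [MetricSpace X] [MetricSpace Y]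
    (f : X → Y) (Ω : Set X) (x : X) (r : ℝ) : ℝ≥0∞ :=
  ⨅ (y : X) (_ : y ∈ Ω) (_ : r ≤ dist y x), edist (f y) (f x)

/-- `H_f(x,r) = L_f(x,r)/l_f(x,r)`, interpreted as `∞` when the denominator is zero. -/
def eH {X Y : Type*} [MetricSpace X] [MetricSpace Y]
    (f : X → Y) (Ω : Set X) (x : X) (r : ℝ) : ℝ≥0∞ :=
  if el f Ω x r = 0 then ⊤ else eL f Ω x r / el f Ω x r

/-- `h_f(x) = liminf_{r → 0} H_f(x,r)`. -/
def hDil {X Y : Type*} [MetricSpace X] [MetricSpace Y]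
    (f : X → Y) (Ω : Set X) (x : X) : ℝ≥0∞ :=
  Filter.liminf (fun r : ℝ => eH f Ω x r) (nhdsWithin 0 (Set.Ioi 0))

/-- `lip_f(x) = liminf_{r → 0} sup_{y ∈ B(x,r)} d_Y(f(y), f(x)) / r` (within `Ω`). -/
def elip {X Y : Type*} [MetricSpace X] [MetricSpace Y]
    (f : X → Y) (Ω : Set X) (x : X) : ℝ≥0∞ :=
  Filter.liminf
    (fun r : ℝ =>
      (⨆ (y : X) (_ : y ∈ Ω ∩ Metric.ball x r), edist (f y) (f x)) / ENNReal.ofReal r)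
    (nhdsWithin 0 (Set.Ioi 0))

/-- `f` is a homeomorphism from `Ω` onto `f(Ω)`. -/
def IsHomeoOn {X Y : Type*} [TopologicalSpace X] [TopologicalSpace Y]
    (f : X → Y) (Ω : Set X) : Prop :=
  ContinuousOn f Ω ∧ ∃ g : Y → X, ContinuousOn g (f '' Ω) ∧ ∀ x ∈ Ω, g (f x) = x

/-- The restricted codimension-`p` Hausdorff content with respect to `μt`. -/
def codimHContent {X : Type*} [MetricSpace X] [MeasurableSpace X]
    (μt : Measure X) (p R : ℝ) (A : Set X) : ℝ≥0∞ :=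
  ⨅ (I : Set (X × ℝ)) (_ : I.Countable) (_ : ∀ b ∈ I, 0 < b.2 ∧ b.2 ≤ R)
    (_ : A ⊆ ⋃ b ∈ I, Metric.ball b.1 b.2),
    ∑' b : I, μt (Metric.ball b.1.1 b.1.2) / ENNReal.ofReal (b.1.2 ^ p)

/-- The codimension-`p` Hausdorff measure with respect to `μt`. -/
def codimH {X : Type*} [MetricSpace X] [MeasurableSpace X]
    (μt : Measure X) (p : ℝ) (A : Set X) : ℝ≥0∞ :=
  ⨆ (R : ℝ) (_ : 0 < R), codimHContent μt p R A

/-- `E` has σ-finite codimension-`p` Hausdorff measure with respect to `μt`. -/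
def SigmaFiniteCodimH {X : Type*} [MetricSpace X] [MeasurableSpace X]
    (μt : Measure X) (p : ℝ) (E : Set X) : Prop :=
  ∃ Ek : ℕ → Set X, E ⊆ ⋃ k, Ek k ∧ ∀ k, codimH μt p (Ek k) < ⊤

/-- `μ₀` is a Vitali measure: every fine covering (by closed balls, recorded as
center–radius pairs of positive radius) of any set `A` admits a pairwise disjoint
subcollection covering `μ₀`-almost all of `A`. -/
def IsVitaliMeasure {Z : Type*} [MetricSpace Z] [MeasurableSpace Z] (μ₀ : Measure Z) : Prop :=
  ∀ (A : Set Z) (F : Set (Z × ℝ)), (∀ b ∈ F, 0 < b.2) →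
    (∀ x ∈ A, ∀ ε : ℝ, 0 < ε → ∃ r : ℝ, 0 < r ∧ r < ε ∧ (x, r) ∈ F) →
    ∃ G ⊆ F, (G.PairwiseDisjoint fun b => Metric.closedBall b.1 b.2) ∧
      μ₀ (A \ ⋃ b ∈ G, Metric.closedBall b.1 b.2) = 0

/-- Ahlfors `Q`-regularity. -/
def AhlforsRegular {Z : Type*} [MetricSpace Z] [MeasurableSpace Z]
    (μ : Measure Z) (Q : ℝ) : Prop :=
  ∃ C : ℝ≥0, 1 ≤ C ∧ ∀ (x : Z) (r : ℝ), 0 < r →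
    ENNReal.ofReal r < EMetric.diam (Set.univ : Set Z) →
    ENNReal.ofReal (r ^ Q) / C ≤ μ (Metric.ball x r) ∧
      μ (Metric.ball x r) ≤ C * ENNReal.ofReal (r ^ Q)

/-- The set `A` is metric doubling with constant `M`: each ball in `A` of radius `r`
can be covered by `M` balls in `A` of radius `r/2`. -/
def MetricDoublingWith {X : Type*} [MetricSpace X] (A : Set X) (M : ℕ) : Prop :=
  ∀ x ∈ A, ∀ r : ℝ, 0 < r → ∃ T : Finset X, ↑T ⊆ A ∧ T.card ≤ M ∧
    A ∩ Metric.ball x r ⊆ ⋃ y ∈ T, Metric.ball y (r / 2)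

end
open Topology in

/-- Key lemma: on a set with uniform doubling at small scales and finite measure,
any fine covering admits a finite disjoint subfamily capturing half the measure. -/
lemma vitali_key_half {Z : Type*} [MetricSpace Z] [MeasurableSpace Z] [BorelSpace Z]
    [SecondCountableTopology Z] (μt : Measure Z) [IsLocallyFiniteMeasure μt]
    (n : ℕ) (S : Set Z) (F' : Set (Z × ℝ))
    (hSD : ∀ x ∈ S, ∀ r : ℝ, 0 < r → r ≤ 1 / (n + 1) →
      μt (ball x (2 * r)) ≤ ((n : ℝ≥0∞) + 1) * μt (ball x r))
    (hSfin : μt S < ⊤)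
    (hpos : ∀ b ∈ F', 0 < b.2)
    (hfine : ∀ x ∈ S, ∀ ε : ℝ, 0 < ε → ∃ r : ℝ, 0 < r ∧ r < ε ∧ (x, r) ∈ F') :
    ∃ G ⊆ F', G.Finite ∧ (G.PairwiseDisjoint fun b => closedBall b.1 b.2) ∧
      μt (S \ ⋃ b ∈ G, closedBall b.1 b.2) ≤ μt S / 2 := by
  classical
  rcases eq_or_ne (μt S) 0 with h0 | h0
  · refine ⟨∅, empty_subset _, finite_empty, pairwiseDisjoint_empty, ?_⟩
    exact le_trans (measure_mono diff_subset) (by simp [h0])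
  have hc : (0 : ℝ) < 1 / (4 * ((n : ℝ) + 1)) := by positivity
  set t : Set (Z × ℝ) := {b ∈ F' | b.1 ∈ S ∧ b.2 ≤ 1 / (4 * ((n : ℝ) + 1))} with ht_def
  have hμB : ∀ a ∈ t, μt (closedBall a.1 (3 * a.2)) ≤
      (((n + 1) ^ 2 : ℝ≥0) : ℝ≥0∞) * μt (closedBall a.1 a.2) := by
    rintro ⟨x, r⟩ ⟨haF, hxS, hrle⟩
    have hr : 0 < r := hpos _ haF
    have hn : (0 : ℝ) < (n : ℝ) + 1 := by positivity
    have hrle' : r * (4 * ((n : ℝ) + 1)) ≤ 1 := by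
      rwa [le_div_iff₀ (by positivity)] at hrle
    have hrn : r ≤ 1 / ((n : ℝ) + 1) := by
      rw [le_div_iff₀ hn]; nlinarith
    have h2rn : 2 * r ≤ 1 / ((n : ℝ) + 1) := by
      rw [le_div_iff₀ hn]; nlinarith
    have h1 : μt (ball x (2 * (2 * r))) ≤ ((n : ℝ≥0∞) + 1) * μt (ball x (2 * r)) :=
      hSD x hxS (2 * r) (by linarith) h2rn
    have h2 : μt (ball x (2 * r)) ≤ ((n : ℝ≥0∞) + 1) * μt (ball x r) :=
      hSD x hxS r hr hrn
    calc μt (closedBall x (3 * r)) ≤ μt (ball x (2 * (2 * r))) :=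
          measure_mono (closedBall_subset_ball (by linarith))
      _ ≤ ((n : ℝ≥0∞) + 1) * μt (ball x (2 * r)) := h1
      _ ≤ ((n : ℝ≥0∞) + 1) * (((n : ℝ≥0∞) + 1) * μt (ball x r)) := by
          exact mul_le_mul_right h2 _
      _ = (((n + 1) ^ 2 : ℝ≥0) : ℝ≥0∞) * μt (ball x r) := by push_cast; ring
      _ ≤ (((n + 1) ^ 2 : ℝ≥0) : ℝ≥0∞) * μt (closedBall x r) := by
          exact mul_le_mul_right (measure_mono ball_subset_closedBall) _
  obtain ⟨u, hut, hu_count, hu_disj, hu_cov⟩ :=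
    Vitali.exists_disjoint_covering_ae μt S t ((n + 1) ^ 2 : ℝ≥0) Prod.snd Prod.fst
      (fun b => closedBall b.1 b.2) (fun a _ => Subset.rfl) hμB
      (fun a ha => ⟨a.1, ball_subset_interior_closedBall (mem_ball_self (hpos _ ha.1))⟩)
      (fun a _ => isClosed_closedBall)
      (by
        intro x hx ε hε
        obtain ⟨r, hr0, hrlt, hrF⟩ := hfine x hx (min ε (1 / (4 * ((n : ℝ) + 1))))
          (lt_min hε hc)
        exact ⟨(x, r), ⟨hrF, hx, (hrlt.trans_le (min_le_right _ _)).le⟩,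
          (hrlt.trans_le (min_le_left _ _)).le, rfl⟩)
  rcases u.eq_empty_or_nonempty with rfl | hne
  · simp only [mem_empty_iff_false, iUnion_of_empty, iUnion_empty, diff_empty] at hu_cov
    exact absurd hu_cov h0
  obtain ⟨f, rfl⟩ := hu_count.exists_eq_range hne
  set U : ℕ → Set Z := fun k => ⋃ i ∈ Finset.range k, closedBall (f i).1 (f i).2 with hU_def
  have hUmono : Monotone fun k => S ∩ U k := by
    intro a b hab
    exact inter_subset_inter_right _ (biUnion_subset_biUnion_left (Finset.range_subset_range.2 hab))
  have hUnion : (⋃ k, S ∩ U k) = S ∩ ⋃ i, closedBall (f i).1 (f i).2 := by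
    ext x
    simp only [hU_def, mem_iUnion, mem_inter_iff, Finset.mem_range, exists_prop]
    constructor
    · rintro ⟨k, hxS, i, _, hxi⟩
      exact ⟨hxS, i, hxi⟩
    · rintro ⟨hxS, i, hxi⟩
      exact ⟨i + 1, hxS, i, Nat.lt_succ_self i, hxi⟩
  have hScov : μt S ≤ μt (S ∩ ⋃ i, closedBall (f i).1 (f i).2) := by
    have : (⋃ a ∈ range f, closedBall a.1 a.2) = ⋃ i, closedBall (f i).1 (f i).2 :=
      biUnion_range
    rw [this] at hu_cov
    calc μt S ≤ μt (S \ ⋃ i, closedBall (f i).1 (f i).2)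
          + μt (S ∩ ⋃ i, closedBall (f i).1 (f i).2) := by
          refine le_trans (measure_mono ?_) (measure_union_le _ _)
          intro x hx
          by_cases hxU : x ∈ ⋃ i, closedBall (f i).1 (f i).2
          · exact Or.inr ⟨hx, hxU⟩
          · exact Or.inl ⟨hx, hxU⟩
      _ = μt (S ∩ ⋃ i, closedBall (f i).1 (f i).2) := by rw [hu_cov, zero_add]
  have htendsto : Tendsto (fun k => μt (S ∩ U k)) atTop
      (nhds (μt (S ∩ ⋃ i, closedBall (f i).1 (f i).2))) := by
    have h' := tendsto_measure_iUnion_atTop (μ := μt) hUmono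
    rw [hUnion] at h'
    exact h'
  have hhalf : μt S / 2 < μt (S ∩ ⋃ i, closedBall (f i).1 (f i).2) :=
    lt_of_lt_of_le (ENNReal.half_lt_self h0 hSfin.ne) hScov
  obtain ⟨k, hk⟩ := ((tendsto_order.1 htendsto).1 _ hhalf).exists
  refine ⟨f '' {i | i < k}, ?_, ((finite_Iio k).image f), ?_, ?_⟩
  · intro b hb
    obtain ⟨i, _, rfl⟩ := hb
    exact (hut ⟨i, rfl⟩).1
  · exact hu_disj.subset (image_subset_range _ _)
  · have hUG : (⋃ b ∈ f '' {i | i < k}, closedBall b.1 b.2) = U k := by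
      rw [biUnion_image]
      ext x
      simp [hU_def, Finset.mem_range]
    rw [hUG]
    -- use a measurable hull
    set T := toMeasurable μt S with hT_def
    have hTm : MeasurableSet T := measurableSet_toMeasurable _ _
    have hUkm : MeasurableSet (U k) := by
      exact (Finset.range k).measurableSet_biUnion fun i _ => measurableSet_closedBall
    have hsplit : μt (T ∩ U k) + μt (T \ U k) = μt S := by
      rw [measure_inter_add_diff T hUkm, measure_toMeasurable]
    by_contra hcon
    push_neg at hcon
    have h1 : μt S / 2 < μt (T \ U k) :=
      lt_of_lt_of_le hcon (measure_mono (diff_subset_diff_left (subset_toMeasurable _ _)))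
    have h2 : μt S / 2 < μt (T ∩ U k) :=
      lt_of_lt_of_le hk (measure_mono (inter_subset_inter_left _ (subset_toMeasurable _ _)))
    have : μt S < μt S := by
      calc μt S = μt S / 2 + μt S / 2 := (ENNReal.add_halves _).symm
        _ < μt (T ∩ U k) + μt (T \ U k) := ENNReal.add_lt_add h2 h1
        _ = μt S := hsplit
    exact lt_irrefl _ this

/-- One step of the exhaustion: enlarge a finite disjoint family by balls avoiding it,
halving the uncovered measure of a given piece. -/
lemma vitali_step {Z : Type*} [MetricSpace Z] [MeasurableSpace Z] [BorelSpace Z]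
    [SecondCountableTopology Z] (μt : Measure Z) [IsLocallyFiniteMeasure μt]
    (F : Set (Z × ℝ)) (hFpos : ∀ b ∈ F, 0 < b.2)
    (n : ℕ) (Bj : Set Z)
    (hBD : ∀ x ∈ Bj, ∀ r : ℝ, 0 < r → r ≤ 1 / (n + 1) →
      μt (ball x (2 * r)) ≤ ((n : ℝ≥0∞) + 1) * μt (ball x r))
    (hBfin : μt Bj < ⊤)
    (hBfine : ∀ x ∈ Bj, ∀ ε : ℝ, 0 < ε → ∃ r : ℝ, 0 < r ∧ r < ε ∧ (x, r) ∈ F)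
    (G : Set (Z × ℝ)) (hGF : G ⊆ F) (hGfin : G.Finite)
    (hGdisj : G.PairwiseDisjoint fun b => closedBall b.1 b.2) :
    ∃ G' : Set (Z × ℝ), G' ⊆ F ∧ G'.Finite ∧
      (G'.PairwiseDisjoint fun b => closedBall b.1 b.2) ∧ G ⊆ G' ∧
      μt (Bj \ ⋃ b ∈ G', closedBall b.1 b.2) ≤
        μt (Bj \ ⋃ b ∈ G, closedBall b.1 b.2) / 2 := by
  classical
  set W : Set Z := ⋃ b ∈ G, closedBall b.1 b.2 with hW_def
  have hWclosed : IsClosed W := hGfin.isClosed_biUnion fun b _ => isClosed_closedBall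
  set S : Set Z := Bj \ W with hS_def
  set F' : Set (Z × ℝ) := {b ∈ F | Disjoint (closedBall b.1 b.2) W} with hF'_def
  have hfine' : ∀ x ∈ S, ∀ ε : ℝ, 0 < ε → ∃ r : ℝ, 0 < r ∧ r < ε ∧ (x, r) ∈ F' := by
    intro x hx ε hε
    obtain ⟨δ, hδ, hδW⟩ := Metric.isOpen_iff.1 hWclosed.isOpen_compl x hx.2
    obtain ⟨r, hr0, hrlt, hrF⟩ := hBfine x hx.1 (min ε (δ / 2)) (lt_min hε (by linarith))
    refine ⟨r, hr0, hrlt.trans_le (min_le_left _ _), hrF, ?_⟩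
    rw [Set.disjoint_left]
    intro y hy hyW
    have : y ∈ Wᶜ := hδW (mem_ball'.2 ((mem_closedBall'.1 hy).trans_lt
      (lt_of_lt_of_le (hrlt.trans_le (min_le_right _ _)) (by linarith))))
    exact this hyW
  obtain ⟨G₀, hG₀F', hG₀fin, hG₀disj, hG₀cov⟩ :=
    vitali_key_half μt n S F' (fun x hx => hBD x hx.1)
      (lt_of_le_of_lt (measure_mono diff_subset) hBfin)
      (fun b hb => hFpos b hb.1) hfine'
  refine ⟨G ∪ G₀, union_subset hGF fun b hb => (hG₀F' hb).1,
    hGfin.union hG₀fin, ?_, subset_union_left, ?_⟩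
  · rw [Set.pairwiseDisjoint_union]
    refine ⟨hGdisj, hG₀disj, fun b hb b' hb' _ => ?_⟩
    have h1 : closedBall b.1 b.2 ⊆ W := subset_biUnion_of_mem (u := fun c : Z × ℝ => closedBall c.1 c.2) hb
    have h2 : Disjoint (closedBall b'.1 b'.2) W := (hG₀F' hb').2
    exact (h2.mono_right h1).symm
  · refine le_trans (measure_mono ?_) hG₀cov
    intro x hx
    refine ⟨⟨hx.1, fun hxW => hx.2 ?_⟩, fun hxU => hx.2 ?_⟩
    · exact biUnion_subset_biUnion_left subset_union_left hxW
    · exact biUnion_subset_biUnion_left subset_union_right hxU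


/-- Proposition 4.3: a locally finite Borel measure with an asymptotic doubling
condition a.e. is a Vitali measure. -/
theorem vitali_of_asymptotically_doubling
    {Z : Type*} [MetricSpace Z] [MeasurableSpace Z] [BorelSpace Z]
    [TopologicalSpace.SeparableSpace Z]
    (μt : Measure Z)
    (hloc : ∀ x : Z, ∃ r : ℝ, 0 < r ∧ μt (Metric.ball x r) < ⊤)
    (h : ∀ᵐ x ∂μt,
      Filter.limsup (fun r : ℝ => μt (Metric.ball x (2 * r)) / μt (Metric.ball x r))
        (nhdsWithin 0 (Set.Ioi 0)) < ⊤) :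
    IsVitaliMeasure μt := by
  classical
  haveI : SecondCountableTopology Z := UniformSpace.secondCountable_of_separable Z
  haveI : IsLocallyFiniteMeasure μt := ⟨fun x => by
    obtain ⟨r, hr, hfin⟩ := hloc x
    exact ⟨ball x r, ball_mem_nhds x hr, hfin⟩⟩
  intro A F hFpos hFfine
  set N : Set Z := {x | ¬ Filter.limsup
      (fun r : ℝ => μt (Metric.ball x (2 * r)) / μt (Metric.ball x r))
      (nhdsWithin 0 (Set.Ioi 0)) < ⊤} with hN_def
  have hN : μt N = 0 := ae_iff.1 h
  set D : ℕ → Set Z := fun n => {x | ∀ r : ℝ, 0 < r → r ≤ 1 / (n + 1) →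
    μt (ball x (2 * r)) ≤ ((n : ℝ≥0∞) + 1) * μt (ball x r)} with hD_def
  -- every good point lies in some `D n`
  have hDcov : ∀ x, x ∉ N → ∃ n, x ∈ D n := by
    intro x hx
    have hL : Filter.limsup
        (fun r : ℝ => μt (Metric.ball x (2 * r)) / μt (Metric.ball x r))
        (nhdsWithin 0 (Set.Ioi 0)) < ⊤ := not_not.1 hx
    obtain ⟨c, hc⟩ := ENNReal.exists_nat_gt hL.ne
    have hev : ∀ᶠ r in nhdsWithin (0 : ℝ) (Set.Ioi 0),
        μt (Metric.ball x (2 * r)) / μt (Metric.ball x r) < c :=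
      Filter.eventually_lt_of_limsup_lt hc
    obtain ⟨ε, εpos, hsub⟩ := Metric.mem_nhdsWithin_iff.1 hev
    obtain ⟨m, hm⟩ := exists_nat_gt (1 / ε)
    refine ⟨c + m, fun r hr0 hrle => ?_⟩
    have h1 : 1 / ε < ((c + m : ℕ) : ℝ) + 1 := by
      refine lt_of_lt_of_le hm ?_
      push_cast
      linarith [Nat.cast_nonneg (α := ℝ) c]
    have hrε : r < ε := by
      refine lt_of_le_of_lt hrle ?_
      rw [div_lt_iff₀ (by positivity)]
      rw [div_lt_iff₀ εpos] at h1
      nlinarith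
    have hmem : r ∈ ball (0 : ℝ) ε ∩ Set.Ioi 0 := by
      constructor
      · simpa [Real.dist_eq, abs_of_pos hr0] using hrε
      · exact hr0
    have hlt : μt (Metric.ball x (2 * r)) / μt (Metric.ball x r) < c := hsub hmem
    have hcn : (c : ℝ≥0∞) ≤ ((c + m : ℕ) : ℝ≥0∞) + 1 := by
      have : (c : ℕ) ≤ c + m + 1 := by omega
      exact_mod_cast this
    refine (ENNReal.div_le_iff_le_mul (Or.inr ?_) (Or.inr ?_)).1 (hlt.le.trans hcn)
    · exact ENNReal.add_ne_top.2 ⟨ENNReal.natCast_ne_top _, ENNReal.one_ne_top⟩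
    · simp
  set Bs : ℕ → Set Z := fun j =>
    (A ∩ D (Nat.unpair j).1) ∩ spanningSets μt (Nat.unpair j).2 with hBs_def
  have hBfin : ∀ j, μt (Bs j) < ⊤ := fun j =>
    lt_of_le_of_lt (measure_mono inter_subset_right) (measure_spanningSets_lt_top μt _)
  have hBD : ∀ j, ∀ x ∈ Bs j, ∀ r : ℝ, 0 < r → r ≤ 1 / ((Nat.unpair j).1 + 1) →
      μt (ball x (2 * r)) ≤ (((Nat.unpair j).1 : ℝ≥0∞) + 1) * μt (ball x r) :=
    fun j x hx => hx.1.2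
  have hBfine : ∀ j, ∀ x ∈ Bs j, ∀ ε : ℝ, 0 < ε → ∃ r : ℝ, 0 < r ∧ r < ε ∧ (x, r) ∈ F :=
    fun j x hx => hFfine x hx.1.1
  -- the step function
  have step : ∀ (G : Set (Z × ℝ)) (j : ℕ), ∃ G' : Set (Z × ℝ),
      (G ⊆ F ∧ G.Finite ∧ G.PairwiseDisjoint fun b => closedBall b.1 b.2) →
      (G' ⊆ F ∧ G'.Finite ∧ (G'.PairwiseDisjoint fun b => closedBall b.1 b.2) ∧ G ⊆ G' ∧
        μt (Bs j \ ⋃ b ∈ G', closedBall b.1 b.2) ≤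
          μt (Bs j \ ⋃ b ∈ G, closedBall b.1 b.2) / 2) := by
    intro G j
    by_cases hG : G ⊆ F ∧ G.Finite ∧ G.PairwiseDisjoint fun b => closedBall b.1 b.2
    · obtain ⟨G', h1, h2, h3, h4, h5⟩ := vitali_step μt F hFpos (Nat.unpair j).1 (Bs j)
        (hBD j) (hBfin j) (hBfine j) G hG.1 hG.2.1 hG.2.2
      exact ⟨G', fun _ => ⟨h1, h2, h3, h4, h5⟩⟩
    · exact ⟨∅, fun hG' => absurd hG' hG⟩
  choose next hnext using step
  set seq : ℕ → Set (Z × ℝ) := fun k =>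
    Nat.rec ∅ (fun k Gk => next Gk (Nat.unpair k).1) k with hseq_def
  have hseq_succ : ∀ k, seq (k + 1) = next (seq k) (Nat.unpair k).1 := fun k => rfl
  have hGood : ∀ k, seq k ⊆ F ∧ (seq k).Finite ∧
      (seq k).PairwiseDisjoint fun b => closedBall b.1 b.2 := by
    intro k
    induction k with
    | zero => exact ⟨empty_subset _, finite_empty, pairwiseDisjoint_empty⟩
    | succ k ih =>
      obtain ⟨h1, h2, h3, _, _⟩ := hnext (seq k) (Nat.unpair k).1 ih
      exact ⟨h1, h2, h3⟩
  have hmono : Monotone seq := by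
    apply monotone_nat_of_le_succ
    intro k
    exact (hnext (seq k) (Nat.unpair k).1 (hGood k)).2.2.2.1
  have hhalf : ∀ k, μt (Bs (Nat.unpair k).1 \ ⋃ b ∈ seq (k + 1), closedBall b.1 b.2) ≤
      μt (Bs (Nat.unpair k).1 \ ⋃ b ∈ seq k, closedBall b.1 b.2) / 2 :=
    fun k => (hnext (seq k) (Nat.unpair k).1 (hGood k)).2.2.2.2
  set Gtot : Set (Z × ℝ) := ⋃ k, seq k with hGtot_def
  have hanti : ∀ j, ∀ k k' : ℕ, k ≤ k' →
      μt (Bs j \ ⋃ b ∈ seq k', closedBall b.1 b.2) ≤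
        μt (Bs j \ ⋃ b ∈ seq k, closedBall b.1 b.2) := by
    intro j k k' hkk'
    exact measure_mono (diff_subset_diff_right
      (biUnion_subset_biUnion_left (hmono hkk')))
  have hclaim : ∀ j m : ℕ, ∃ k : ℕ,
      μt (Bs j \ ⋃ b ∈ seq k, closedBall b.1 b.2) ≤ μt (Bs j) * 2⁻¹ ^ m := by
    intro j m
    induction m with
    | zero =>
      exact ⟨0, by simpa using measure_mono (diff_subset (t := ⋃ b ∈ seq 0, closedBall b.1 b.2))⟩
    | succ m ih =>
      obtain ⟨k, hk⟩ := ih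
      set k' := Nat.pair j k with hk'_def
      have hk'k : k ≤ k' := Nat.right_le_pair j k
      have hju : (Nat.unpair k').1 = j := by rw [hk'_def, Nat.unpair_pair]
      refine ⟨k' + 1, ?_⟩
      calc μt (Bs j \ ⋃ b ∈ seq (k' + 1), closedBall b.1 b.2)
          ≤ μt (Bs j \ ⋃ b ∈ seq k', closedBall b.1 b.2) / 2 := by
            have := hhalf k'
            rwa [hju] at this
        _ ≤ μt (Bs j \ ⋃ b ∈ seq k, closedBall b.1 b.2) / 2 :=
            ENNReal.div_le_div_right (hanti j k k' hk'k) 2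
        _ ≤ (μt (Bs j) * 2⁻¹ ^ m) / 2 := ENNReal.div_le_div_right hk 2
        _ = μt (Bs j) * 2⁻¹ ^ (m + 1) := by
            rw [div_eq_mul_inv, mul_assoc, pow_succ]
  have hBnull : ∀ j, μt (Bs j \ ⋃ b ∈ Gtot, closedBall b.1 b.2) = 0 := by
    intro j
    have hle : ∀ m : ℕ, μt (Bs j \ ⋃ b ∈ Gtot, closedBall b.1 b.2) ≤
        μt (Bs j) * 2⁻¹ ^ m := by
      intro m
      obtain ⟨k, hk⟩ := hclaim j m
      refine le_trans (measure_mono (diff_subset_diff_right ?_)) hk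
      exact biUnion_subset_biUnion_left (subset_iUnion seq k)
    have htend : Tendsto (fun m : ℕ => μt (Bs j) * 2⁻¹ ^ m) atTop (nhds 0) := by
      have h2 : Tendsto (fun m : ℕ => (2⁻¹ : ℝ≥0∞) ^ m) atTop (nhds 0) :=
        ENNReal.tendsto_pow_atTop_nhds_zero_of_lt_one
          (by simp [ENNReal.inv_lt_one, one_lt_two])
      have := ENNReal.Tendsto.const_mul h2 (Or.inr (hBfin j).ne)
      simpa using this
    exact le_antisymm (ge_of_tendsto' htend hle) zero_le
  refine ⟨Gtot, iUnion_subset fun k => (hGood k).1, ?_, ?_⟩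
  · intro b hb b' hb' hne
    obtain ⟨k, hk⟩ := mem_iUnion.1 hb
    obtain ⟨k', hk'⟩ := mem_iUnion.1 hb'
    exact (hGood (max k k')).2.2 (hmono (le_max_left k k') hk)
      (hmono (le_max_right k k') hk') hne
  · have hsub : A \ ⋃ b ∈ Gtot, closedBall b.1 b.2 ⊆
        N ∪ ⋃ j, (Bs j \ ⋃ b ∈ Gtot, closedBall b.1 b.2) := by
      intro x hx
      by_cases hxN : x ∈ N
      · exact Or.inl hxN
      · obtain ⟨n, hn⟩ := hDcov x hxN
        have hxuniv : x ∈ ⋃ m, spanningSets μt m := by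
          rw [iUnion_spanningSets]; exact mem_univ x
        obtain ⟨m, hm⟩ := mem_iUnion.1 hxuniv
        refine Or.inr (mem_iUnion.2 ⟨Nat.pair n m, ⟨⟨hx.1, ?_⟩, ?_⟩, hx.2⟩)
        · rw [Nat.unpair_pair]; exact hn
        · rw [Nat.unpair_pair]; exact hm
    refine le_antisymm (le_trans (measure_mono hsub) ?_) zero_le
    exact (measure_union_null hN (measure_iUnion_null hBnull)).le
end

section
/- Let Ω ⊂ X be open, suppose there exists a Borel regular outer measure μ̃ ≥ μ on X that is doubling within Ω, and let f: Ω → f(Ω) ⊂ Y be a homeomorphism with f(Ω) open. Then the Jacobian J_f(x) := lim_{r→0} ν(f(B(x,r)))/μ(B(x,r)) exists (as a finite limit) for μ-a.e. x ∈ Ω, and ∫_Ω J_f dμ ≤ ν(f(Ω)). -/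
open Set Metric MeasureTheory Filter ENNReal NNReal TopologicalSpace

/-- Squeeze: convergence of closed-ball ratios implies convergence of open-ball ratios. -/
lemma jacobian_aux_tendsto_ball_ratio {Z : Type*} [MetricSpace Z]
    [MeasurableSpace Z] (lam mu : Measure Z) (z : Z) (c : ℝ≥0∞) (hc : c ≠ ⊤)
    (hpos : ∀ r : ℝ, 0 < r → 0 < mu (Metric.closedBall z r))
    (hfin : ∀ r : ℝ, 0 < r → mu (Metric.ball z r) ≠ ⊤)
    (hA : Filter.Tendsto
      (fun r : ℝ => lam (Metric.closedBall z r) / mu (Metric.closedBall z r))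
      (nhdsWithin 0 (Set.Ioi 0)) (nhds c)) :
    Filter.Tendsto (fun r : ℝ => lam (Metric.ball z r) / mu (Metric.ball z r))
      (nhdsWithin 0 (Set.Ioi 0)) (nhds c) := by
  rw [ENNReal.tendsto_nhds hc] at hA ⊢
  intro ε hε
  obtain ⟨u, hu, hsub⟩ := mem_nhdsGT_iff_exists_Ioo_subset.1 (hA ε hε)
  filter_upwards [Ioo_mem_nhdsGT_of_mem (⟨le_rfl, hu⟩ : (0:ℝ) ∈ Set.Ico 0 u)] with r hr
  have hrpos : (0:ℝ) < r := hr.1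
  set seq : ℕ → ℝ := fun n => r - r / (n + 2) with hseq
  have hseq_le : ∀ n : ℕ, r / ((n:ℝ) + 2) ≤ r / 2 := by
    intro n
    apply div_le_div_of_nonneg_left hrpos.le (by norm_num)
    have : (0:ℝ) ≤ (n:ℝ) := Nat.cast_nonneg n
    linarith
  have hseq_pos : ∀ n, 0 < seq n := by
    intro n
    have := hseq_le n
    simp only [hseq]
    linarith
  have hseq_lt : ∀ n, seq n < r := by
    intro n
    have hpos2 : (0:ℝ) < r / ((n:ℝ) + 2) := by positivity
    simp only [hseq]; linarith
  have hmono : Monotone fun n : ℕ => Metric.closedBall z (seq n) := by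
    intro n m hnm
    apply Metric.closedBall_subset_closedBall
    have : r / ((m:ℝ) + 2) ≤ r / ((n:ℝ) + 2) := by
      apply div_le_div_of_nonneg_left hrpos.le (by positivity)
      have : (n:ℝ) ≤ (m:ℝ) := Nat.cast_le.2 hnm
      linarith
    simp only [hseq]; linarith
  have hunion : Metric.ball z r = ⋃ n, Metric.closedBall z (seq n) := by
    ext w
    simp only [Metric.mem_ball, Set.mem_iUnion, Metric.mem_closedBall]
    constructor
    · intro hd
      have hd' : 0 < r - dist w z := by linarith
      obtain ⟨n, hn⟩ := exists_nat_ge (r / (r - dist w z))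
      refine ⟨n, ?_⟩
      have h2 : r / (r - dist w z) ≤ (n:ℝ) + 2 := by linarith
      have h3 : r ≤ ((n:ℝ) + 2) * (r - dist w z) := by
        rw [div_le_iff₀ hd'] at h2; linarith
      have h4 : r / ((n:ℝ) + 2) ≤ r - dist w z := by
        rw [div_le_iff₀ (by positivity : (0:ℝ) < (n:ℝ) + 2)]
        linarith
      simp only [hseq]; linarith
    · rintro ⟨n, hn⟩
      exact lt_of_le_of_lt hn (hseq_lt n)
  have hl : lam (Metric.ball z r) = ⨆ n, lam (Metric.closedBall z (seq n)) := by
    rw [hunion]; exact Directed.measure_iUnion hmono.directed_le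
  have hm : mu (Metric.ball z r) = ⨆ n, mu (Metric.closedBall z (seq n)) := by
    rw [hunion]; exact Directed.measure_iUnion hmono.directed_le
  have key : ∀ n : ℕ,
      lam (Metric.closedBall z (seq n)) ≤ (c + ε) * mu (Metric.closedBall z (seq n)) ∧
      (c - ε) * mu (Metric.closedBall z (seq n)) ≤ lam (Metric.closedBall z (seq n)) := by
    intro n
    have hin : seq n ∈ Set.Ioo (0:ℝ) u := ⟨hseq_pos n, lt_trans (hseq_lt n) hr.2⟩
    have hic : lam (Metric.closedBall z (seq n)) / mu (Metric.closedBall z (seq n)) ∈ Set.Icc (c - ε) (c + ε) := hsub hin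
    rw [Set.mem_Icc] at hic
    have hμ0 : mu (Metric.closedBall z (seq n)) ≠ 0 := (hpos _ (hseq_pos n)).ne'
    have hμt : mu (Metric.closedBall z (seq n)) ≠ ⊤ := by
      refine ne_top_of_le_ne_top (hfin r hrpos) (measure_mono ?_)
      exact Metric.closedBall_subset_ball (hseq_lt n)
    constructor
    · calc lam (Metric.closedBall z (seq n))
          = lam (Metric.closedBall z (seq n)) / mu (Metric.closedBall z (seq n)) *
              mu (Metric.closedBall z (seq n)) := (ENNReal.div_mul_cancel hμ0 hμt).symm
        _ ≤ (c + ε) * mu (Metric.closedBall z (seq n)) := mul_le_mul_left hic.2 _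
    · calc (c - ε) * mu (Metric.closedBall z (seq n))
          ≤ lam (Metric.closedBall z (seq n)) / mu (Metric.closedBall z (seq n)) *
              mu (Metric.closedBall z (seq n)) := mul_le_mul_left hic.1 _
        _ = lam (Metric.closedBall z (seq n)) := ENNReal.div_mul_cancel hμ0 hμt
  have hb0 : mu (Metric.ball z r) ≠ 0 := by
    have h1 : 0 < mu (Metric.closedBall z (r/2)) := hpos _ (by positivity)
    have h2 : mu (Metric.closedBall z (r/2)) ≤ mu (Metric.ball z r) :=
      measure_mono (Metric.closedBall_subset_ball (by linarith))
    exact (lt_of_lt_of_le h1 h2).ne'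
  have hbt : mu (Metric.ball z r) ≠ ⊤ := hfin r hrpos
  have hup : lam (Metric.ball z r) ≤ (c + ε) * mu (Metric.ball z r) := by
    rw [hl, hm, ENNReal.mul_iSup]
    exact iSup_mono fun n => (key n).1
  have hlow : (c - ε) * mu (Metric.ball z r) ≤ lam (Metric.ball z r) := by
    rw [hl, hm, ENNReal.mul_iSup]
    exact iSup_mono fun n => (key n).2
  constructor
  · rw [ENNReal.le_div_iff_mul_le (Or.inl hb0) (Or.inl hbt)]
    exact hlow
  · exact ENNReal.div_le_of_le_mul hup

/-- Equation (4.1): the Jacobian `J_f` exists `μ`-a.e. in `Ω` and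
`∫_Ω J_f dμ ≤ ν(f(Ω))`. -/
theorem jacobian_exists_and_integral_le
    {X Y : Type*} [MetricSpace X] [MeasurableSpace X] [BorelSpace X]
    [ConnectedSpace X] [Nontrivial X]
    [MetricSpace Y] [MeasurableSpace Y] [BorelSpace Y] [TopologicalSpace.SeparableSpace Y]
    (μ : Measure X) (ν : Measure Y)
    (hμball : ∀ (x : X) (r : ℝ), μ (Metric.ball x r) < ⊤)
    (hνball : ∀ (y : Y) (r : ℝ), ν (Metric.ball y r) < ⊤)
    (Ω : Set X) (hΩopen : IsOpen Ω)
    (μt : Measure X) (hle : ∀ S : Set X, μ S ≤ μt S) (hdbl : DoublingWithin μt Ω)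
    (f : X → Y) (hf : IsHomeoOn f Ω) (hfΩopen : IsOpen (f '' Ω)) :
    ∃ J : X → ℝ≥0∞,
      (∀ᵐ x ∂μ.restrict Ω, J x < ⊤ ∧
        Filter.Tendsto (fun r : ℝ => ν (f '' (Metric.ball x r ∩ Ω)) / μ (Metric.ball x r))
          (nhdsWithin 0 (Set.Ioi 0)) (nhds (J x))) ∧
      ∫⁻ x in Ω, J x ∂μ ≤ ν (f '' Ω) := by
  classical
  obtain ⟨Cd, hCd⟩ := hdbl
  obtain ⟨hfc, g, hgc, hgf⟩ := hf
  have hΩm : MeasurableSet Ω := hΩopen.measurableSet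
  have hfΩm : MeasurableSet (f '' Ω) := hfΩopen.measurableSet
  -- the homeomorphism between Ω and f '' Ω, as subtypes
  have hginv : ∀ w : (f '' Ω), g ↑w ∈ Ω := fun w => by
    obtain ⟨x, hx, hfx⟩ := w.2
    rw [← hfx, hgf x hx]; exact hx
  let e : Ω ≃ₜ (f '' Ω) :=
    { toFun := fun z => ⟨f z, Set.mem_image_of_mem f z.2⟩
      invFun := fun w => ⟨g w, hginv w⟩
      left_inv := fun z => Subtype.ext (hgf z z.2)
      right_inv := fun w => Subtype.ext (by
        obtain ⟨x, hx, hfx⟩ := w.2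
        simp only [← hfx, hgf x hx])
      continuous_toFun :=
        Continuous.subtype_mk (continuousOn_iff_continuous_restrict.1 hfc)
          (fun z => Set.mem_image_of_mem f z.2)
      continuous_invFun :=
        Continuous.subtype_mk (continuousOn_iff_continuous_restrict.1 hgc) hginv }
  -- second countability
  haveI : SecondCountableTopology Y := UniformSpace.secondCountable_of_separable Y
  haveI : SecondCountableTopology Ω := e.secondCountableTopology
  -- measurable embeddings
  have meΩ : MeasurableEmbedding ((↑) : Ω → X) := MeasurableEmbedding.subtype_coe hΩm
  have meF : MeasurableEmbedding (fun z : Ω => f ↑z) := by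
    have h1 : MeasurableEmbedding ((↑) : (f '' Ω) → Y) := MeasurableEmbedding.subtype_coe hfΩm
    exact h1.comp e.measurableEmbedding
  -- the measures on the subtype
  set μZ : Measure Ω := μ.comap (↑) with hμZdef
  set μtZ : Measure Ω := μt.comap (↑) with hμtZdef
  set lamZ : Measure Ω := ν.comap (fun z : Ω => f ↑z) with hlamZdef
  have hμZ_apply : ∀ s : Set Ω, μZ s = μ (((↑) : Ω → X) '' s) := fun s => meΩ.comap_apply _ _
  have hμtZ_apply : ∀ s : Set Ω, μtZ s = μt (((↑) : Ω → X) '' s) := fun s => meΩ.comap_apply _ _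
  have hlamZ_apply : ∀ s : Set Ω, lamZ s = ν ((fun z : Ω => f ↑z) '' s) :=
    fun s => meF.comap_apply _ _
  -- transfer of balls
  have ball_pre : ∀ (z : Ω) (r : ℝ),
      (Metric.ball z r : Set Ω) = ((↑) : Ω → X) ⁻¹' Metric.ball (z : X) r := by
    intro z r; ext w; simp [Metric.mem_ball, Subtype.dist_eq]
  have cball_pre : ∀ (z : Ω) (r : ℝ),
      (Metric.closedBall z r : Set Ω) = ((↑) : Ω → X) ⁻¹' Metric.closedBall (z : X) r := by
    intro z r; ext w; simp [Metric.mem_closedBall, Subtype.dist_eq]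
  have image_ball : ∀ (z : Ω) (r : ℝ),
      ((↑) : Ω → X) '' (Metric.ball z r) = Ω ∩ Metric.ball (z : X) r := by
    intro z r; rw [ball_pre, Subtype.image_preimage_coe]
  have image_cball : ∀ (z : Ω) (r : ℝ),
      ((↑) : Ω → X) '' (Metric.closedBall z r) = Ω ∩ Metric.closedBall (z : X) r := by
    intro z r; rw [cball_pre, Subtype.image_preimage_coe]
  -- local finiteness
  haveI : IsLocallyFiniteMeasure μtZ := by
    refine ⟨fun z => ?_⟩
    obtain ⟨ρ, hρpos, hρsub⟩ := Metric.isOpen_iff.1 hΩopen z z.2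
    refine ⟨Metric.ball z (ρ/4), Metric.ball_mem_nhds _ (by positivity), ?_⟩
    have h4 : Metric.ball (z : X) (ρ/4) ⊆ Ω :=
      (Metric.ball_subset_ball (by linarith)).trans hρsub
    have hdb := hCd z (ρ/4) (by positivity) h4
    calc μtZ (Metric.ball z (ρ/4)) = μt (Ω ∩ Metric.ball (z : X) (ρ/4)) := by
          rw [hμtZ_apply, image_ball]
      _ ≤ μt (Metric.ball (z : X) (2 * (ρ/4))) :=
          measure_mono (Set.inter_subset_right.trans (Metric.ball_subset_ball (by linarith)))
      _ < ⊤ := hdb.2.2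
  haveI : IsLocallyFiniteMeasure μZ := by
    refine ⟨fun z => ⟨Metric.ball z 1, Metric.ball_mem_nhds _ one_pos, ?_⟩⟩
    rw [hμZ_apply, image_ball]
    exact lt_of_le_of_lt (measure_mono Set.inter_subset_right) (hμball _ 1)
  haveI : IsLocallyFiniteMeasure lamZ := by
    refine ⟨fun z => ?_⟩
    have hcont : Continuous (fun z : Ω => f ↑z) := continuousOn_iff_continuous_restrict.1 hfc
    refine ⟨(fun z : Ω => f ↑z) ⁻¹' Metric.ball (f ↑z) 1,
      hcont.continuousAt.preimage_mem_nhds (Metric.ball_mem_nhds _ one_pos), ?_⟩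
    rw [hlamZ_apply]
    exact lt_of_le_of_lt (measure_mono (Set.image_preimage_subset _ _)) (hνball _ 1)
  -- key doubling estimate on the subtype
  have hkey : ∀ (z : Ω) (ρ : ℝ), 0 < ρ → Metric.ball (z : X) ρ ⊆ Ω →
      ∀ r : ℝ, r ∈ Set.Ioo 0 (ρ/4) →
      μtZ (Metric.closedBall z (3 * r)) ≤ (Cd : ℝ≥0∞) ^ 2 * μtZ (Metric.closedBall z r) := by
    intro z ρ hρpos hρsub r hr
    have h1 : Metric.ball (z : X) r ⊆ Ω :=
      (Metric.ball_subset_ball (by linarith [hr.2] : r ≤ ρ)).trans hρsub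
    have h2 : Metric.ball (z : X) (2 * r) ⊆ Ω :=
      (Metric.ball_subset_ball (by linarith [hr.2] : 2 * r ≤ ρ)).trans hρsub
    have d1 := hCd (z : X) r hr.1 h1
    have d2 := hCd (z : X) (2 * r) (by linarith [hr.1]) h2
    have hcb : Metric.closedBall (z : X) r ⊆ Ω := by
      intro w hw
      have : w ∈ Metric.ball (z : X) (2 * r) := by
        rw [Metric.mem_closedBall] at hw
        rw [Metric.mem_ball]
        linarith [hr.1]
      exact h2 this
    calc μtZ (Metric.closedBall z (3 * r)) = μt (Ω ∩ Metric.closedBall (z : X) (3 * r)) := by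
          rw [hμtZ_apply, image_cball]
      _ ≤ μt (Metric.ball (z : X) (2 * (2 * r))) := by
          refine measure_mono (Set.inter_subset_right.trans ?_)
          apply Metric.closedBall_subset_ball
          linarith [hr.1]
      _ ≤ (Cd : ℝ≥0∞) * μt (Metric.ball (z : X) (2 * r)) := d2.2.1
      _ ≤ (Cd : ℝ≥0∞) * ((Cd : ℝ≥0∞) * μt (Metric.ball (z : X) r)) :=
          mul_le_mul_right d1.2.1 _
      _ = (Cd : ℝ≥0∞) ^ 2 * μt (Metric.ball (z : X) r) := by ring
      _ ≤ (Cd : ℝ≥0∞) ^ 2 * μtZ (Metric.closedBall z r) := by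
          refine mul_le_mul_right ?_ _
          rw [hμtZ_apply, image_cball]
          exact measure_mono (Set.subset_inter h1 Metric.ball_subset_closedBall)
  -- the Vitali family
  have freq : ∀ z : Ω, ∃ᶠ r in nhdsWithin (0:ℝ) (Set.Ioi 0),
      μtZ (Metric.closedBall z (3 * r)) ≤ (Cd ^ 2 : ℝ≥0) * μtZ (Metric.closedBall z r) := by
    intro z
    apply Filter.Eventually.frequently
    obtain ⟨ρ, hρpos, hρsub⟩ := Metric.isOpen_iff.1 hΩopen z z.2
    filter_upwards [Ioo_mem_nhdsGT_of_mem
      (⟨le_rfl, by positivity⟩ : (0:ℝ) ∈ Set.Ico 0 (ρ/4))] with r hr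
    have h := hkey z ρ hρpos hρsub r hr
    rw [ENNReal.coe_pow]
    exact h
  let v : VitaliFamily μtZ := Vitali.vitaliFamily μtZ (Cd ^ 2) freq
  have hacZ : μZ ≪ μtZ := by
    intro s hs
    have hle' : μZ s ≤ μtZ s := by rw [hμZ_apply, hμtZ_apply]; exact hle _
    exact le_antisymm (hle'.trans hs.le) zero_le
  let v' : VitaliFamily μZ := v.mono μZ hacZ
  have htends : ∀ z : Ω, Filter.Tendsto (fun r : ℝ => Metric.closedBall z r)
      (nhdsWithin (0:ℝ) (Set.Ioi 0)) (v'.filterAt z) := by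
    intro z
    rw [VitaliFamily.tendsto_filterAt_iff]
    obtain ⟨ρ, hρpos, hρsub⟩ := Metric.isOpen_iff.1 hΩopen z z.2
    constructor
    · filter_upwards [Ioo_mem_nhdsGT_of_mem
        (⟨le_rfl, by positivity⟩ : (0:ℝ) ∈ Set.Ico 0 (ρ/4))] with r hr
      refine ⟨Metric.isClosed_closedBall,
        ⟨z, Metric.ball_subset_interior_closedBall (Metric.mem_ball_self hr.1)⟩,
        r, subset_rfl, ?_⟩
      have h := hkey z ρ hρpos hρsub r hr
      rw [ENNReal.coe_pow]
      exact h
    · intro ε hε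
      filter_upwards [Ioo_mem_nhdsGT_of_mem
        (⟨le_rfl, hε⟩ : (0:ℝ) ∈ Set.Ico 0 ε)] with r hr
      exact Metric.closedBall_subset_closedBall hr.2.le
  have H1 := v'.ae_tendsto_rnDeriv lamZ
  have H2 := Measure.rnDeriv_lt_top lamZ μZ
  have H3 := v'.ae_eventually_measure_pos
  set D : Ω → ℝ≥0∞ := lamZ.rnDeriv μZ with hD
  refine ⟨fun x => if h : x ∈ Ω then D ⟨x, h⟩ else 0, ?_, ?_⟩
  · rw [ae_restrict_iff_subtype hΩm]
    filter_upwards [H1, H2, H3] with z h1 h2 h3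
    have hz : (z : X) ∈ Ω := z.2
    have hJz : (if h : (z : X) ∈ Ω then D ⟨(z : X), h⟩ else 0) = D z := by
      simp only [dif_pos hz, Subtype.coe_eta]
    rw [hJz]
    refine ⟨h2, ?_⟩
    have hA : Filter.Tendsto
        (fun r : ℝ => lamZ (Metric.closedBall z r) / μZ (Metric.closedBall z r))
        (nhdsWithin (0:ℝ) (Set.Ioi 0)) (nhds (D z)) := h1.comp (htends z)
    have hposc : ∀ r : ℝ, 0 < r → 0 < μZ (Metric.closedBall z r) := by
      intro r hr
      have hev : ∀ᶠ s in nhdsWithin (0:ℝ) (Set.Ioi 0), 0 < μZ (Metric.closedBall z s) :=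
        (htends z).eventually h3
      have h2ev : ∀ᶠ s in nhdsWithin (0:ℝ) (Set.Ioi 0), s ∈ Set.Ioo (0:ℝ) r :=
        Filter.eventually_mem_set.2 (Ioo_mem_nhdsGT_of_mem ⟨le_rfl, hr⟩)
      obtain ⟨s, hs1, hs2⟩ := (hev.and h2ev).exists
      exact lt_of_lt_of_le hs1 (measure_mono (Metric.closedBall_subset_closedBall hs2.2.le))
    have hfinb : ∀ r : ℝ, 0 < r → μZ (Metric.ball z r) ≠ ⊤ := by
      intro r _
      rw [hμZ_apply, image_ball]
      exact (lt_of_le_of_lt (measure_mono Set.inter_subset_right) (hμball _ r)).ne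
    have hB := jacobian_aux_tendsto_ball_ratio lamZ μZ z (D z) h2.ne hposc hfinb hA
    obtain ⟨ρ, hρpos, hρsub⟩ := Metric.isOpen_iff.1 hΩopen z hz
    apply hB.congr'
    filter_upwards [Ioo_mem_nhdsGT_of_mem (⟨le_rfl, hρpos⟩ : (0:ℝ) ∈ Set.Ico 0 ρ)] with r hr
    have hsubΩ : Metric.ball (z : X) r ⊆ Ω := (Metric.ball_subset_ball hr.2.le).trans hρsub
    congr 1
    · rw [hlamZ_apply]
      congr 1
      rw [show ((fun z : Ω => f ↑z) '' Metric.ball z r) = f '' (Subtype.val '' Metric.ball z r)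
          from (Set.image_image f Subtype.val _).symm, image_ball]
      rw [Set.inter_comm]
    · rw [hμZ_apply, image_ball, Set.inter_comm, Set.inter_eq_left.2 hsubΩ]
  · have hJint : ∫⁻ x in Ω, (fun x : X => if h : x ∈ Ω then D ⟨x, h⟩ else 0) x ∂μ
        = ∫⁻ z : Ω, D z ∂μZ := by
      rw [← MeasureTheory.lintegral_subtype_comap hΩm]
      apply lintegral_congr
      intro z
      simp only [dif_pos z.2, Subtype.coe_eta]
    rw [hJint]
    calc ∫⁻ z : Ω, D z ∂μZ ≤ lamZ Set.univ := Measure.lintegral_rnDeriv_le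
      _ = ν (f '' Ω) := by
          rw [hlamZ_apply, Set.image_univ]
          congr 1
          exact (Set.image_eq_range f Ω).symm
end

section
/- Let Ω ⊂ X be open and bounded, and let f: Ω → f(Ω) ⊂ Y be a homeomorphism with f(Ω) open and ν(f(Ω)) < ∞. Suppose there exists a Borel regular outer measure μ̃ ≥ μ on X that is doubling within Ω. Suppose there exist a μ-measurable set E ⊂ Ω and μ-measurable functions Q(x) > 1 and R(x) > 0 on Ω∖E such that limsup_{r→0} μ(B(x,r))/r^{Q(x)} < R(x)·liminf_{r→0} ν(B(f(x),r))/r^{Q(x)} for μ-a.e. x ∈ Ω∖E. Suppose Q := inf_{x∈Ω∖E} Q(x) > 1 and let 1 ≤ q ≤ Q. Assume either 1 ≤ q < Q and the function x ↦ ((Q(x)−q)/Q(x))·(R(x)·h_f(x)^{Q(x)})^{q/(Q(x)−q)} belongs to L¹(Ω∖E, μ), or q = Q and x ↦ R(x)^{1/Q(x)}·h_f(x) belongs to L^∞(Ω∖E, μ). Then lip_f ∈ L^q(Ω∖E, μ), i.e. ∫_{Ω∖E} lip_f^q dμ < ∞. -/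
open Set Metric MeasureTheory Filter ENNReal NNReal TopologicalSpace

noncomputable section

lemma subtype_closedBall {X : Type*} [MetricSpace X] {Ω : Set X} (x : ↥Ω) (r : ℝ) :
    Metric.closedBall x r = Subtype.val ⁻¹' Metric.closedBall (x : X) r := by
  ext y; simp [Metric.mem_closedBall, Subtype.dist_eq]

lemma subtype_ball {X : Type*} [MetricSpace X] {Ω : Set X} (x : ↥Ω) (r : ℝ) :
    Metric.ball x r = Subtype.val ⁻¹' Metric.ball (x : X) r := by
  ext y; simp [Metric.mem_ball, Subtype.dist_eq]

lemma vitali_cover_est {X : Type*} [MetricSpace X] [MeasurableSpace X] [BorelSpace X]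
    (μ ω μt : Measure X) (hle : ∀ S : Set X, μ S ≤ μt S)
    (Ω : Set X) (hΩopen : IsOpen Ω) (hsep : IsSeparable Ω)
    (Cd : ℝ≥0) (hdbl : DoublingWithinC μt Cd Ω)
    (A : Set X) (hA : A ⊆ Ω)
    (U : Set X) (hU : IsOpen U) (hAU : A ⊆ U) (t : ℝ≥0∞)
    (hfine : ∀ x ∈ A, ∃ᶠ r in nhdsWithin (0:ℝ) (Set.Ioi 0),
      t * μ (Metric.closedBall x r) ≤ ω (Metric.closedBall x r)) :
    t * μ A ≤ ω U := by
  haveI : SeparableSpace ↥Ω := hsep.separableSpace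
  haveI : SecondCountableTopology ↥Ω := UniformSpace.secondCountable_of_separable _
  have hΩm : MeasurableSet Ω := hΩopen.measurableSet
  have hemb : MeasurableEmbedding ((↑) : ↥Ω → X) := MeasurableEmbedding.subtype_coe hΩm
  set μT : Measure ↥Ω := μt.comap Subtype.val with hμT
  have hμTapp : ∀ S : Set ↥Ω, μT S = μt (Subtype.val '' S) := fun S => hemb.comap_apply μt S
  -- locally finite
  haveI : IsLocallyFiniteMeasure μT := by
    constructor
    intro x
    obtain ⟨ε, hε0, hεΩ⟩ := Metric.isOpen_iff.1 hΩopen (x : X) x.2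
    refine ⟨Metric.ball x (ε/2), Metric.ball_mem_nhds _ (by positivity), ?_⟩
    have h1 : Metric.ball (x : X) (ε/2) ⊆ Ω := (Metric.ball_subset_ball (by linarith)).trans hεΩ
    have h2 := (hdbl (x : X) (ε/2) (by positivity) ?_).2.2
    · refine lt_of_le_of_lt ?_ h2
      rw [hμTapp]
      refine measure_mono ?_
      rintro y ⟨z, hz, rfl⟩
      rw [subtype_ball] at hz
      exact Metric.ball_subset_ball (by linarith) hz
    · exact (Metric.ball_subset_ball (by linarith)).trans h1
  rcases eq_or_ne t 0 with rfl | ht0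
  · simpa using (measure_mono (fun y hy => hAU hy) : ω A ≤ ω U).trans' (by simp)
  -- the fine family of closed balls, recorded in the subtype
  set T : Set (↥Ω × ℝ) := {a | (a.1 : X) ∈ A ∧ 0 < a.2 ∧ Metric.ball (a.1 : X) (2 * a.2) ⊆ Ω ∧
      Metric.closedBall (a.1 : X) a.2 ⊆ U ∧
      t * μ (Metric.closedBall (a.1 : X) a.2) ≤ ω (Metric.closedBall (a.1 : X) a.2)} with hT
  have key := Vitali.exists_disjoint_covering_ae (α := ↥Ω) (ι := ↥Ω × ℝ) μT
    (Subtype.val ⁻¹' A) T (Cd * Cd) (fun a => a.2) (fun a => a.1)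
    (fun a => Metric.closedBall a.1 a.2)
    (fun a _ => le_refl _)
    ?_ ?_ (fun a _ => Metric.isClosed_closedBall) ?_
  · obtain ⟨u, huT, hucount, hudisj, hucov⟩ := key
    -- closed balls in X attached to elements of u
    have hcbΩ : ∀ a ∈ u, Metric.closedBall (a.1 : X) a.2 ⊆ Ω := by
      intro a hau
      have h := huT hau
      exact (Metric.closedBall_subset_ball (by linarith [h.2.1])).trans h.2.2.1
    have himg : ∀ a ∈ u, Subtype.val '' (Metric.closedBall a.1 a.2 : Set ↥Ω)
        = Metric.closedBall (a.1 : X) a.2 := by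
      intro a hau
      rw [subtype_closedBall, Subtype.image_preimage_coe]
      exact inter_eq_self_of_subset_right (hcbΩ a hau)
    -- the complement of the union is null
    have hnull : μ (A \ ⋃ a ∈ u, Metric.closedBall (a.1 : X) a.2) = 0 := by
      refine le_antisymm ?_ zero_le
      refine le_trans (hle _) ?_
      have hsub : A \ ⋃ a ∈ u, Metric.closedBall (a.1 : X) a.2 ⊆
          Subtype.val '' ((Subtype.val ⁻¹' A : Set ↥Ω) \ ⋃ a ∈ u, Metric.closedBall a.1 a.2) := by
        rintro x ⟨hxA, hxU⟩
        refine ⟨⟨x, hA hxA⟩, ⟨hxA, ?_⟩, rfl⟩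
        intro hmem
        simp only [mem_iUnion] at hmem
        obtain ⟨a, hau, hxa⟩ := hmem
        refine hxU ?_
        simp only [mem_iUnion]
        exact ⟨a, hau, by rw [subtype_closedBall] at hxa; exact hxa⟩
      refine le_trans (measure_mono hsub) ?_
      rw [← hμTapp]
      exact le_of_eq hucov
    -- conclude
    have hAle : μ A ≤ ∑' a : u, μ (Metric.closedBall ((a : ↥Ω × ℝ).1 : X) (a : ↥Ω × ℝ).2) := by
      have := measure_mono (show A ⊆ (A \ ⋃ a ∈ u, Metric.closedBall (a.1 : X) a.2) ∪
          ⋃ a ∈ u, Metric.closedBall (a.1 : X) a.2 from fun x hx => by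
        by_cases h : x ∈ ⋃ a ∈ u, Metric.closedBall (a.1 : X) a.2
        · exact Or.inr h
        · exact Or.inl ⟨hx, h⟩) (μ := μ)
      refine le_trans this ?_
      refine le_trans (measure_union_le _ _) ?_
      rw [hnull, zero_add]
      haveI : Countable u := hucount.to_subtype
      exact (measure_biUnion_le μ hucount _)
    have hdisjX : u.PairwiseDisjoint (fun a : ↥Ω × ℝ => Metric.closedBall (a.1 : X) a.2) := by
      intro a hau b hbu hab
      have := hudisj hau hbu hab
      rw [Function.onFun] at this ⊢
      rw [Set.disjoint_left] at this ⊢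
      intro x hxa hxb
      have hxΩ : x ∈ Ω := hcbΩ a hau hxa
      refine this (a := ⟨x, hxΩ⟩) ?_ ?_
      · rw [subtype_closedBall]; exact hxa
      · rw [subtype_closedBall]; exact hxb
    calc t * μ A ≤ t * ∑' a : u, μ (Metric.closedBall ((a:↥Ω × ℝ).1 : X) (a:↥Ω × ℝ).2) := by
          exact mul_le_mul_right hAle t
      _ = ∑' a : u, t * μ (Metric.closedBall ((a:↥Ω × ℝ).1 : X) (a:↥Ω × ℝ).2) :=
          ENNReal.tsum_mul_left.symm
      _ ≤ ∑' a : u, ω (Metric.closedBall ((a:↥Ω × ℝ).1 : X) (a:↥Ω × ℝ).2) := by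
          refine ENNReal.tsum_le_tsum (fun a => ?_)
          exact (huT a.2).2.2.2.2
      _ = ω (⋃ a ∈ u, Metric.closedBall ((a:↥Ω × ℝ).1 : X) (a:↥Ω × ℝ).2) := by
          haveI : Countable u := hucount.to_subtype
          rw [measure_biUnion hucount hdisjX (fun a hau => measurableSet_closedBall)]
      _ ≤ ω U := by
          refine measure_mono ?_
          refine iUnion₂_subset (fun a hau => (huT hau).2.2.2.1)
  -- μB : doubling estimate
  · rintro ⟨x, r⟩ ⟨hxA, hr0, hball, hcbU, hest⟩
    have h8 : Metric.ball (x : X) r ⊆ Ω :=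
      (Metric.ball_subset_ball (by linarith)).trans hball
    have h1 := (hdbl (x : X) r hr0 h8).2.1
    have h2 := (hdbl (x : X) (2 * r) (by linarith) hball).2.1
    rw [hμTapp, hμTapp]
    have hi1 : Subtype.val '' (Metric.closedBall ((x, r).1 : ↥Ω) (3 * (x, r).2) : Set ↥Ω)
        ⊆ Metric.ball (x : X) (2 * (2 * r)) := by
      rintro y ⟨z, hz, rfl⟩
      rw [subtype_closedBall] at hz
      simp only [mem_preimage, Metric.mem_closedBall] at hz
      simp only [Metric.mem_ball]
      exact lt_of_le_of_lt hz (by linarith)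
    have hi2 : Metric.ball (x : X) r ⊆
        Subtype.val '' (Metric.closedBall ((x, r).1 : ↥Ω) (x, r).2 : Set ↥Ω) := by
      intro y hy
      refine ⟨⟨y, h8 hy⟩, ?_, rfl⟩
      rw [subtype_closedBall]
      simp only [mem_preimage, Metric.mem_closedBall]
      exact le_of_lt hy
    calc μt (Subtype.val '' (Metric.closedBall ((x, r).1 : ↥Ω) (3 * (x, r).2) : Set ↥Ω))
        ≤ μt (Metric.ball (x : X) (2 * (2 * r))) := measure_mono hi1
      _ ≤ Cd * μt (Metric.ball (x : X) (2 * r)) := h2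
      _ ≤ Cd * (Cd * μt (Metric.ball (x : X) r)) := mul_le_mul_right h1 _
      _ ≤ ↑(Cd * Cd) * μt (Subtype.val '' (Metric.closedBall ((x, r).1 : ↥Ω) (x, r).2 : Set ↥Ω)) := by
          rw [ENNReal.coe_mul, mul_assoc]
          exact mul_le_mul_right (mul_le_mul_right (measure_mono hi2) _) _
  · rintro ⟨x, r⟩ ⟨hxA, hr0, hball, hcbU, hest⟩
    refine ⟨x, ?_⟩
    exact mem_interior.2 ⟨Metric.ball x r, Metric.ball_subset_closedBall, isOpen_ball,
      Metric.mem_ball_self hr0⟩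
  -- fineness
  · intro x hx ε hε
    obtain ⟨δ, hδ0, hδ⟩ := Metric.isOpen_iff.1 (hΩopen.inter hU) (x : X) ⟨hA hx, hAU hx⟩
    have hIoo : Set.Ioo (0:ℝ) (min ε (δ/3)) ∈ nhdsWithin (0:ℝ) (Set.Ioi 0) := by
      refine Ioo_mem_nhdsGT_of_mem ?_
      constructor
      · exact le_refl _
      · positivity
    obtain ⟨r, hr1, hr2⟩ := ((hfine (x:X) hx).and_eventually (eventually_of_mem hIoo (fun r hr => hr))).exists
    refine ⟨⟨x, r⟩, ⟨hx, hr2.1, ?_, ?_, hr1⟩, le_of_lt (lt_of_lt_of_le hr2.2 (min_le_left _ _)), rfl⟩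
    · refine subset_trans ?_ ((subset_inter_iff.1 hδ).1)
      refine Metric.ball_subset_ball ?_
      have := hr2.2
      have h3 : r < δ/3 := lt_of_lt_of_le hr2.2 (min_le_right _ _)
      linarith
    · refine subset_trans ?_ ((subset_inter_iff.1 hδ).2)
      refine (Metric.closedBall_subset_ball ?_)
      have h3 : r < δ/3 := lt_of_lt_of_le hr2.2 (min_le_right _ _)
      linarith


lemma sep_of_homeo {X Y : Type*} [MetricSpace X] [MetricSpace Y] [SeparableSpace Y]
    (f : X → Y) (Ω : Set X) (hf : IsHomeoOn f Ω) : IsSeparable Ω := by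
  obtain ⟨hc, g, hg, hgf⟩ := hf
  have h1 : IsSeparable (f '' Ω) := .of_separableSpace _
  haveI : SeparableSpace ↥(f '' Ω) := h1.separableSpace
  have h2 : IsSeparable (range ((f '' Ω).restrict g)) :=
    isSeparable_range (ContinuousOn.restrict hg)
  refine h2.mono ?_
  intro x hx
  exact ⟨⟨f x, ⟨x, hx, rfl⟩⟩, hgf x hx⟩

lemma exists_pullback_measure {X Y : Type*} [MetricSpace X] [MeasurableSpace X] [BorelSpace X]
    [MetricSpace Y] [MeasurableSpace Y] [BorelSpace Y] [Nonempty X]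
    (ν : Measure Y) (f : X → Y) (Ω : Set X) (hf : IsHomeoOn f Ω) (hfΩopen : IsOpen (f '' Ω)) :
    ∃ ω : Measure X, ∀ S : Set X, MeasurableSet S → ω S = ν (f '' (S ∩ Ω)) := by
  obtain ⟨hc, g, hg, hgf⟩ := hf
  set x₀ : X := Classical.arbitrary X
  set g' : Y → X := fun y => @dite X (y ∈ f '' Ω) (Classical.dec _) (fun _ => g y) (fun _ => x₀)
    with hg'
  have hgval : ∀ y ∈ f '' Ω, g' y = g y := by
    intro y hy; simp [g', hy]
  have hgval' : ∀ y, y ∉ f '' Ω → g' y = x₀ := by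
    intro y hy; simp [g', hy]
  have hmeas : Measurable g' := by
    refine measurable_of_isOpen (fun V hV => ?_)
    by_cases hx0 : x₀ ∈ V
    · have : g' ⁻¹' V = (f '' Ω ∩ g ⁻¹' V) ∪ (f '' Ω)ᶜ := by
        ext y
        by_cases hy : y ∈ f '' Ω <;> simp [mem_preimage, hy, hgval, hgval', hx0]
      rw [this]
      exact (hg.isOpen_inter_preimage hfΩopen hV).measurableSet.union
        hfΩopen.measurableSet.compl
    · have : g' ⁻¹' V = (f '' Ω ∩ g ⁻¹' V) := by
        ext y
        by_cases hy : y ∈ f '' Ω <;> simp [mem_preimage, hy, hgval, hgval', hx0]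
      rw [this]
      exact (hg.isOpen_inter_preimage hfΩopen hV).measurableSet
  refine ⟨(ν.restrict (f '' Ω)).map g', fun S hS => ?_⟩
  rw [Measure.map_apply hmeas hS, Measure.restrict_apply (hmeas hS)]
  congr 1
  ext y
  constructor
  · rintro ⟨hyS, x, hxΩ, rfl⟩
    refine ⟨x, ⟨?_, hxΩ⟩, rfl⟩
    rw [mem_preimage, hgval _ (show f x ∈ f '' Ω from ⟨x, hxΩ, rfl⟩), hgf x hxΩ] at hyS
    exact hyS
  · rintro ⟨x, ⟨hxS, hxΩ⟩, rfl⟩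
    have hfx : f x ∈ f '' Ω := ⟨x, hxΩ, rfl⟩
    refine ⟨?_, hfx⟩
    rw [mem_preimage, hgval _ hfx, hgf x hxΩ]
    exact hxS

lemma usc_measure_closedBall {X : Type*} [MetricSpace X] [MeasurableSpace X]
    [OpensMeasurableSpace X] (ω : Measure X) (q : ℝ)
    (hfin : ∀ (x : X) (r : ℝ), ω (Metric.closedBall x r) < ⊤) :
    Measurable (fun x => ω (Metric.closedBall x q)) := by
  have husc : UpperSemicontinuous (fun x => ω (Metric.closedBall x q)) := by
    intro x c hc
    have hkey : ∃ δ > (0:ℝ), ω (Metric.closedBall x (q + δ)) < c := by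
      by_contra hcon
      push_neg at hcon
      have h1 : Antitone (fun n : ℕ => Metric.closedBall x (q + 1/(n+1))) := by
        intro n m hnm
        refine Metric.closedBall_subset_closedBall ?_
        have hcast : (n:ℝ) ≤ m := Nat.cast_le.2 hnm
        have hn0 : (0:ℝ) ≤ (n:ℝ) := Nat.cast_nonneg n
        have : (1:ℝ)/(m+1) ≤ 1/(n+1) := by
          apply one_div_le_one_div_of_le <;> linarith
        linarith
      have h2 : (⋂ n : ℕ, Metric.closedBall x (q + 1/(n+1))) = Metric.closedBall x q := by
        apply Subset.antisymm
        · intro y hy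
          simp only [mem_iInter, Metric.mem_closedBall] at hy ⊢
          by_contra hlt
          push_neg at hlt
          obtain ⟨n, hn⟩ := exists_nat_one_div_lt (show 0 < dist y x - q by linarith)
          have := hy n
          linarith
        · intro y hy
          simp only [mem_iInter, Metric.mem_closedBall] at hy ⊢
          intro n
          have : (0:ℝ) < 1/(n+1) := by positivity
          linarith
      have h3 := h1.measure_iInter (fun n => measurableSet_closedBall.nullMeasurableSet)
        ⟨0, (hfin x _).ne⟩ (μ := ω)
      rw [h2] at h3
      have h4 : c ≤ ω (Metric.closedBall x q) := by
        rw [h3]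
        refine le_iInf (fun n => ?_)
        exact hcon (1/(n+1)) (by positivity)
      exact absurd hc (not_lt.2 h4)
    obtain ⟨δ, hδ0, hδ⟩ := hkey
    filter_upwards [Metric.ball_mem_nhds x (half_pos hδ0)] with y hy
    refine lt_of_le_of_lt (measure_mono ?_) hδ
    intro z hz
    simp only [Metric.mem_closedBall] at hz ⊢
    have h5 := (Metric.mem_ball.1 hy)
    rw [dist_comm y x] at h5
    calc dist z x ≤ dist z y + dist y x := dist_triangle _ _ _
      _ ≤ q + δ := by rw [dist_comm y x]; linarith
  exact husc.measurable


/-- In a connected nontrivial space, `el f Ω x r` is eventually small as `r → 0⁺`. -/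
lemma el_small {X Y : Type*} [MetricSpace X] [MetricSpace Y] [ConnectedSpace X] [Nontrivial X]
    (f : X → Y) (Ω : Set X) (hΩopen : IsOpen Ω) {x : X} (hx : x ∈ Ω)
    (hcont : ContinuousOn f Ω) (δ' : ℝ≥0∞) (hδ' : 0 < δ') :
    ∀ᶠ r in nhdsWithin (0:ℝ) (Set.Ioi 0), el f Ω x r < δ' := by
  -- continuity: find ρ > 0 with ball x ρ ⊆ Ω and f-image within δ'
  have hcw : ContinuousWithinAt f Ω x := hcont x hx
  have htend : Tendsto f (nhdsWithin x Ω) (nhds (f x)) := hcw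
  have hball : EMetric.ball (f x) δ' ∈ nhds (f x) := EMetric.ball_mem_nhds _ hδ'
  have hpre : f ⁻¹' EMetric.ball (f x) δ' ∈ nhdsWithin x Ω := htend hball
  rw [mem_nhdsWithin] at hpre
  obtain ⟨O, hO, hxO, hOsub⟩ := hpre
  obtain ⟨ρ₁, hρ₁, hρ₁sub⟩ := Metric.isOpen_iff.1 hO x hxO
  obtain ⟨ρ₂, hρ₂, hρ₂sub⟩ := Metric.isOpen_iff.1 hΩopen x hx
  -- a point at exact positive distance
  obtain ⟨z, hz⟩ := exists_ne x
  have hdz : 0 < dist z x := dist_pos.2 hz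
  set τ : ℝ := min (min ρ₁ ρ₂ / 2) (dist z x) with hτ
  have hτ0 : 0 < τ := by
    apply lt_min
    · have : 0 < min ρ₁ ρ₂ := lt_min hρ₁ hρ₂
      linarith
    · exact hdz
  have hτle : τ ≤ dist z x := min_le_right _ _
  -- the distance function has connected image containing 0 and `dist z x`
  have hconn : IsPreconnected ((fun y => dist y x) '' univ) :=
    (isPreconnected_univ).image _ (continuous_dist.comp (continuous_id.prodMk
      continuous_const)).continuousOn
  have hy : ∃ y : X, dist y x = τ := by
    have h0 : (0:ℝ) ∈ (fun y => dist y x) '' univ := ⟨x, mem_univ _, dist_self x⟩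
    have h1 : dist z x ∈ (fun y => dist y x) '' univ := ⟨z, mem_univ _, rfl⟩
    have := hconn.Icc_subset h0 h1 ⟨le_of_lt hτ0, hτle⟩
    obtain ⟨y, _, hy⟩ := this
    exact ⟨y, hy⟩
  obtain ⟨y, hyd⟩ := hy
  have hyΩ : y ∈ Ω := by
    apply hρ₂sub
    rw [Metric.mem_ball, hyd]
    have : min ρ₁ ρ₂ ≤ ρ₂ := min_le_right _ _
    have h2 : τ ≤ min ρ₁ ρ₂ / 2 := min_le_left _ _
    have : 0 < min ρ₁ ρ₂ := lt_min hρ₁ hρ₂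
    linarith
  have hyO : y ∈ O := by
    apply hρ₁sub
    rw [Metric.mem_ball, hyd]
    have : min ρ₁ ρ₂ ≤ ρ₁ := min_le_left _ _
    have h2 : τ ≤ min ρ₁ ρ₂ / 2 := min_le_left _ _
    have : 0 < min ρ₁ ρ₂ := lt_min hρ₁ hρ₂
    linarith
  have hfy : edist (f y) (f x) < δ' := hOsub ⟨hyO, hyΩ⟩
  -- conclude for r ∈ (0, τ]
  filter_upwards [Ioo_mem_nhdsGT_of_mem (Set.left_mem_Ico.2 hτ0)] with r hr
  calc el f Ω x r ≤ edist (f y) (f x) := by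
        refine iInf_le_of_le y (iInf_le_of_le hyΩ (iInf_le_of_le ?_ le_rfl))
        rw [hyd]; exact le_of_lt hr.2
    _ < δ' := hfy


lemma pointwise_est {X Y : Type*} [MetricSpace X] [MeasurableSpace X] [OpensMeasurableSpace X]
    [ConnectedSpace X] [Nontrivial X] [MetricSpace Y] [MeasurableSpace Y]
    (μ ω : Measure X) (ν : Measure Y)
    (Ω : Set X) (hΩopen : IsOpen Ω) (f : X → Y) (hcont : ContinuousOn f Ω)
    (hfΩopen : IsOpen (f '' Ω))
    (hω : ∀ S : Set X, MeasurableSet S → ω S = ν (f '' (S ∩ Ω)))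
    {x : X} (hx : x ∈ Ω) {Qx Rx : ℝ} (hQx : 0 < Qx) (hRx : 0 < Rx)
    (hhae : Filter.limsup (fun r : ℝ => μ (Metric.ball x r) / ENNReal.ofReal (r ^ Qx))
          (nhdsWithin 0 (Set.Ioi 0))
        < ENNReal.ofReal Rx *
          Filter.liminf (fun r : ℝ => ν (Metric.ball (f x) r) / ENNReal.ofReal (r ^ Qx))
            (nhdsWithin 0 (Set.Ioi 0)))
    (hh : hDil f Ω x ≠ ⊤) (J : ℝ≥0∞) (hJtop : J ≠ ⊤)
    (hJdef : J = ⨅ n : ℕ, ⨆ (q : ℚ) (_ : 0 < (q:ℝ) ∧ (q:ℝ) < 1/(n+1)),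
        ω (Metric.closedBall x (q:ℝ)) / μ (Metric.closedBall x (q:ℝ))) :
    elip f Ω x ^ Qx ≤
      ENNReal.ofReal Rx * ENNReal.ofReal (4 ^ Qx) * hDil f Ω x ^ Qx * J := by
  set l := nhdsWithin (0:ℝ) (Set.Ioi 0) with hl
  set h := hDil f Ω x with hhdef
  set Supn : ℕ → ℝ≥0∞ := fun n => ⨆ (q : ℚ) (_ : 0 < (q:ℝ) ∧ (q:ℝ) < 1/(n+1)),
      ω (Metric.closedBall x (q:ℝ)) / μ (Metric.closedBall x (q:ℝ)) with hSupn
  have hRne : ENNReal.ofReal Rx ≠ 0 := (ENNReal.ofReal_pos.2 hRx).ne'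
  have hRtop : ENNReal.ofReal Rx ≠ ⊤ := ENNReal.ofReal_ne_top
  -- choose the intermediate density value c
  have hdiv : Filter.limsup (fun r : ℝ => μ (Metric.ball x r) / ENNReal.ofReal (r ^ Qx)) l
      / ENNReal.ofReal Rx
      < Filter.liminf (fun r : ℝ => ν (Metric.ball (f x) r) / ENNReal.ofReal (r ^ Qx)) l := by
    rw [ENNReal.div_lt_iff (Or.inl hRne) (Or.inl hRtop)]
    rw [mul_comm] at hhae
    exact hhae
  obtain ⟨c, hc1, hc2⟩ := exists_between hdiv
  have hc0 : c ≠ 0 := by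
    intro h0
    rw [h0] at hc1
    exact absurd hc1 (by simp)
  have hctop : c ≠ ⊤ := hc2.ne_top
  have hαc : Filter.limsup (fun r : ℝ => μ (Metric.ball x r) / ENNReal.ofReal (r ^ Qx)) l
      < ENNReal.ofReal Rx * c := by
    rw [ENNReal.div_lt_iff (Or.inl hRne) (Or.inl hRtop)] at hc1
    rw [mul_comm] at hc1
    exact hc1
  have key : ∀ ε : ℝ≥0∞, ε ≠ 0 → ε ≠ ⊤ → ∀ n : ℕ,
      elip f Ω x ^ Qx ≤ ENNReal.ofReal Rx * ENNReal.ofReal (4 ^ Qx) * (h + ε) ^ Qx * Supn n := by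
    intro ε hε0 hεtop n
    have hfreq : ∃ᶠ r in l, eH f Ω x r < h + ε :=
      frequently_lt_of_liminf_lt (by isBoundedDefault) (ENNReal.lt_add_right hh hε0)
    have hα' : ∀ᶠ s in l, μ (Metric.ball x s) / ENNReal.ofReal (s ^ Qx)
        < ENNReal.ofReal Rx * c := eventually_lt_of_limsup_lt hαc
    have hmul4 : Tendsto (fun r : ℝ => 4 * r) l l := by
      rw [hl]
      unfold nhdsWithin
      refine Filter.Tendsto.inf ?_ ?_
      · have h5 : Continuous (fun r : ℝ => 4 * r) :=
          continuous_const.mul continuous_id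
        have h6 := h5.tendsto (0:ℝ)
        norm_num at h6
        exact h6
      · rw [tendsto_principal_principal]
        intro r hr
        exact mul_pos (by norm_num : (0:ℝ) < 4) hr
    have hev2 : ∀ᶠ r in l, μ (Metric.ball x (4*r)) ≤
        (ENNReal.ofReal Rx * c) * ENNReal.ofReal ((4*r) ^ Qx) := by
      refine (hmul4.eventually (hα'.and self_mem_nhdsWithin)).mono ?_
      rintro r ⟨hlt, hmem⟩
      have hb0 : ENNReal.ofReal ((4*r)^Qx) ≠ 0 :=
        (ENNReal.ofReal_pos.2 (Real.rpow_pos_of_pos hmem _)).ne'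
      exact le_of_lt ((ENNReal.div_lt_iff (Or.inl hb0) (Or.inl ENNReal.ofReal_ne_top)).1 hlt)
    have hev3 : ∀ᶠ s in l, c * ENNReal.ofReal (s ^ Qx) ≤ ν (Metric.ball (f x) s) := by
      refine ((eventually_lt_of_lt_liminf hc2 (by isBoundedDefault)).and
        self_mem_nhdsWithin).mono ?_
      rintro s ⟨hlt, hs⟩
      have hb0 : ENNReal.ofReal (s^Qx) ≠ 0 :=
        (ENNReal.ofReal_pos.2 (Real.rpow_pos_of_pos hs _)).ne'
      exact le_of_lt ((ENNReal.lt_div_iff_mul_lt (Or.inl hb0)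
        (Or.inl ENNReal.ofReal_ne_top)).1 hlt)
    obtain ⟨δ₀, hδ₀pos, hδ₀⟩ := (nhdsGT_basis (0:ℝ)).eventually_iff.1 hev3
    obtain ⟨δ₁, hδ₁pos, hδ₁⟩ := Metric.isOpen_iff.1 hfΩopen (f x) ⟨x, hx, rfl⟩
    have hel := el_small f Ω hΩopen hx hcont
      (min (ENNReal.ofReal δ₀) (ENNReal.ofReal δ₁))
      (lt_min (ENNReal.ofReal_pos.2 hδ₀pos) (ENNReal.ofReal_pos.2 hδ₁pos))
    have hevsmall : ∀ᶠ r in l, r < 1/(2*((n:ℝ)+1)) ∧ 0 < r := by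
      have hmem : Set.Ioo (0:ℝ) (1/(2*((n:ℝ)+1))) ∈ l :=
        Ioo_mem_nhdsGT_of_mem (Set.left_mem_Ico.2 (by positivity))
      filter_upwards [hmem] with r hr
      exact ⟨hr.2, hr.1⟩
    have hcomb := hfreq.and_eventually (hev2.and (hel.and hevsmall))
    -- rewrite elip ^ Qx as a liminf
    have hlim : elip f Ω x ^ Qx = Filter.liminf (fun r : ℝ =>
        ((⨆ (y : X) (_ : y ∈ Ω ∩ Metric.ball x r), edist (f y) (f x)) / ENNReal.ofReal r) ^ Qx)
        l := by
      have hiso := (ENNReal.orderIsoRpow Qx hQx).liminf_apply (f := l)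
        (u := fun r : ℝ =>
          (⨆ (y : X) (_ : y ∈ Ω ∩ Metric.ball x r), edist (f y) (f x)) / ENNReal.ofReal r)
      exact hiso
    rw [hlim]
    refine liminf_le_of_frequently_le' ?_
    refine hcomb.mono ?_
    rintro r ⟨hH, hμ4, hel', hrsmall, hr0⟩
    -- notation
    set lval := el f Ω x r with hlval
    have hl0 : lval ≠ 0 := by
      intro h0
      rw [eH, ← hlval, if_pos h0] at hH
      exact absurd hH not_top_lt
    have hltop : lval ≠ ⊤ :=
      ((lt_of_lt_of_le hel' (min_le_left _ _)).trans_le le_top).ne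
    have hltop' : lval < ⊤ := lt_top_iff_ne_top.2 hltop
    set s := lval.toReal with hs
    have hofs : ENNReal.ofReal s = lval := ENNReal.ofReal_toReal hltop
    have hs0 : 0 < s := ENNReal.toReal_pos hl0 hltop
    have hsδ₀ : s < δ₀ := by
      have := lt_of_lt_of_le hel' (min_le_left _ _)
      rwa [← hofs, ENNReal.ofReal_lt_ofReal_iff hδ₀pos] at this
    have hsδ₁ : s < δ₁ := by
      have := lt_of_lt_of_le hel' (min_le_right _ _)
      rwa [← hofs, ENNReal.ofReal_lt_ofReal_iff hδ₁pos] at this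
    -- L ≤ (h+ε) l
    have hL : eL f Ω x r ≤ (h + ε) * lval := by
      have hHeq : eH f Ω x r = eL f Ω x r / lval := by rw [eH, ← hlval, if_neg hl0]
      have h2 : eL f Ω x r / lval ≤ h + ε := le_of_lt (hHeq ▸ hH)
      calc eL f Ω x r = eL f Ω x r / lval * lval := (ENNReal.div_mul_cancel hl0 hltop).symm
        _ ≤ (h + ε) * lval := mul_le_mul_left h2 _
    -- density at radius s
    have hν : c * lval ^ Qx ≤ ν (Metric.ball (f x) s) := by
      have := hδ₀ ⟨hs0, hsδ₀⟩
      rwa [← ENNReal.ofReal_rpow_of_pos hs0, hofs] at this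
    -- rational radius
    obtain ⟨ρ, hρ1, hρ2⟩ := exists_rat_btwn (show r < 2*r by linarith)
    have hρpos : 0 < (ρ:ℝ) := lt_trans hr0 hρ1
    -- inclusion of the small ball in the image
    have hsub : Metric.ball (f x) s ⊆ f '' (Metric.closedBall x (ρ:ℝ) ∩ Ω) := by
      intro y hy
      have hyfΩ : y ∈ f '' Ω := by
        apply hδ₁
        exact Metric.ball_subset_ball (le_of_lt hsδ₁) hy
      obtain ⟨z, hzΩ, rfl⟩ := hyfΩ
      refine ⟨z, ⟨?_, hzΩ⟩, rfl⟩
      rw [Metric.mem_closedBall]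
      by_contra hge
      push_neg at hge
      have hge' : r ≤ dist z x := le_trans (le_of_lt hρ1) (le_of_lt hge)
      have hlow : lval ≤ edist (f z) (f x) := by
        rw [hlval, el]
        exact iInf_le_of_le z (iInf_le_of_le hzΩ (iInf_le_of_le hge' le_rfl))
      have hup : edist (f z) (f x) < lval := by
        rw [edist_dist, ← hofs]
        exact ENNReal.ofReal_lt_ofReal_iff hs0 |>.2 (Metric.mem_ball.1 hy)
      exact absurd (lt_of_le_of_lt hlow hup) (lt_irrefl _)
    have hνω : ν (Metric.ball (f x) s) ≤ ω (Metric.closedBall x (ρ:ℝ)) := by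
      calc ν (Metric.ball (f x) s) ≤ ν (f '' (Metric.closedBall x (ρ:ℝ) ∩ Ω)) :=
            measure_mono hsub
        _ = ω (Metric.closedBall x (ρ:ℝ)) := (hω _ measurableSet_closedBall).symm
    have hq : 0 < (ρ:ℝ) ∧ (ρ:ℝ) < 1/((n:ℝ)+1) := by
      constructor
      · exact hρpos
      · have h1 : (ρ:ℝ) < 2*r := hρ2
        have h2 : r < 1/(2*((n:ℝ)+1)) := hrsmall
        have h3 : (0:ℝ) < (n:ℝ)+1 := by positivity
        rw [lt_div_iff₀ h3]
        rw [lt_div_iff₀ (by positivity : (0:ℝ) < 2*((n:ℝ)+1))] at h2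
        nlinarith
    -- measure of the closed ball
    have hμρ : μ (Metric.closedBall x (ρ:ℝ)) ≤
        (ENNReal.ofReal Rx * c) * (ENNReal.ofReal (4^Qx) * ENNReal.ofReal (r^Qx)) := by
      have hsub2 : Metric.closedBall x (ρ:ℝ) ⊆ Metric.ball x (4*r) := by
        refine Metric.closedBall_subset_ball ?_
        calc (ρ:ℝ) < 2*r := hρ2
          _ < 4*r := by linarith
      refine le_trans (measure_mono hsub2) (le_trans hμ4 (le_of_eq ?_))
      rw [Real.mul_rpow (by norm_num) (le_of_lt hr0), ENNReal.ofReal_mul (by positivity)]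
    set b := ENNReal.ofReal (r^Qx) with hb
    have hb0 : b ≠ 0 := (ENNReal.ofReal_pos.2 (Real.rpow_pos_of_pos hr0 _)).ne'
    have hbtop : b ≠ ⊤ := ENNReal.ofReal_ne_top
    -- bound the sup quotient
    have hg : (⨆ (y : X) (_ : y ∈ Ω ∩ Metric.ball x r), edist (f y) (f x)) / ENNReal.ofReal r
        ≤ eL f Ω x r / ENNReal.ofReal r := by
      refine ENNReal.div_le_div_right ?_ _
      refine iSup₂_le (fun y hy => ?_)
      rw [eL]
      exact le_iSup_of_le y (le_iSup_of_le hy.1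
        (le_iSup_of_le (le_of_lt (Metric.mem_ball.1 hy.2)) le_rfl))
    have hgQ : (((⨆ (y : X) (_ : y ∈ Ω ∩ Metric.ball x r), edist (f y) (f x))
        / ENNReal.ofReal r) ^ Qx) ≤ (h+ε)^Qx * lval^Qx / b := by
      calc (((⨆ (y : X) (_ : y ∈ Ω ∩ Metric.ball x r), edist (f y) (f x))
          / ENNReal.ofReal r) ^ Qx)
          ≤ (eL f Ω x r / ENNReal.ofReal r) ^ Qx := ENNReal.rpow_le_rpow hg (le_of_lt hQx)
        _ = eL f Ω x r ^ Qx / (ENNReal.ofReal r) ^ Qx := by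
            rw [ENNReal.div_rpow_of_nonneg _ _ (le_of_lt hQx)]
        _ ≤ ((h+ε) * lval) ^ Qx / b := by
            rw [ENNReal.ofReal_rpow_of_pos hr0, ← hb]
            exact ENNReal.div_le_div_right (ENNReal.rpow_le_rpow hL (le_of_lt hQx)) _
        _ = (h+ε)^Qx * lval^Qx / b := by
            rw [ENNReal.mul_rpow_of_nonneg _ _ (le_of_lt hQx)]
    -- final pointwise bound
    set W := ω (Metric.closedBall x (ρ:ℝ)) with hW
    set M := μ (Metric.closedBall x (ρ:ℝ)) with hM
    have hWpos : W ≠ 0 := by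
      intro h0
      have h1 : ν (Metric.ball (f x) s) = 0 := le_antisymm (h0 ▸ hνω) zero_le
      have h2 := hν
      rw [h1] at h2
      have h3 : c * lval ^ Qx ≠ 0 := by
        refine mul_ne_zero hc0 ?_
        exact (ENNReal.rpow_pos (lt_of_le_of_ne zero_le (Ne.symm hl0)) hltop).ne'
      exact h3 (le_antisymm h2 zero_le)
    have hB0 : ENNReal.ofReal Rx * ENNReal.ofReal (4^Qx) * (h+ε)^Qx ≠ 0 := by
      refine mul_ne_zero (mul_ne_zero hRne ?_) ?_
      · exact (ENNReal.ofReal_pos.2 (Real.rpow_pos_of_pos (by norm_num) _)).ne'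
      · refine (ENNReal.rpow_pos ?_ ?_).ne'
        · exact lt_of_lt_of_le (lt_of_le_of_ne zero_le (Ne.symm hε0)) le_add_self
        · exact ENNReal.add_ne_top.2 ⟨hh, hεtop⟩
    have hlQ : lval ^ Qx ≤ W / c := by
      rw [ENNReal.le_div_iff_mul_le (Or.inl hc0) (Or.inl hctop), mul_comm]
      exact le_trans hν hνω
    have hmain : (((⨆ (y : X) (_ : y ∈ Ω ∩ Metric.ball x r), edist (f y) (f x))
        / ENNReal.ofReal r) ^ Qx)
        ≤ ENNReal.ofReal Rx * ENNReal.ofReal (4^Qx) * (h+ε)^Qx * (W / M) := by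
      rcases eq_or_ne M 0 with hM0 | hM0
      · rw [hM0, ENNReal.div_zero hWpos]
        rw [ENNReal.mul_top hB0]
        exact le_top
      · have hMtop : M ≠ ⊤ := by
          refine ne_top_of_le_ne_top ?_ hμρ
          exact ENNReal.mul_ne_top (ENNReal.mul_ne_top hRtop hctop)
            (ENNReal.mul_ne_top ENNReal.ofReal_ne_top ENNReal.ofReal_ne_top)
        -- multiply through by M
        have hstep : (((⨆ (y : X) (_ : y ∈ Ω ∩ Metric.ball x r), edist (f y) (f x))
            / ENNReal.ofReal r) ^ Qx) * M
            ≤ ENNReal.ofReal Rx * ENNReal.ofReal (4^Qx) * (h+ε)^Qx * W := by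
          calc (((⨆ (y : X) (_ : y ∈ Ω ∩ Metric.ball x r), edist (f y) (f x))
              / ENNReal.ofReal r) ^ Qx) * M
              ≤ ((h+ε)^Qx * lval^Qx / b) *
                ((ENNReal.ofReal Rx * c) * (ENNReal.ofReal (4^Qx) * b)) :=
                mul_le_mul' hgQ hμρ
            _ = ((h+ε)^Qx * lval^Qx * (ENNReal.ofReal Rx * c) * ENNReal.ofReal (4^Qx))
                * (b⁻¹ * b) := by
                rw [div_eq_mul_inv]; ring
            _ = (h+ε)^Qx * lval^Qx * (ENNReal.ofReal Rx * c) * ENNReal.ofReal (4^Qx) := by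
                rw [ENNReal.inv_mul_cancel hb0 hbtop, mul_one]
            _ ≤ (h+ε)^Qx * (W / c) * (ENNReal.ofReal Rx * c) * ENNReal.ofReal (4^Qx) := by
                refine mul_le_mul_left (mul_le_mul_left (mul_le_mul_right hlQ _) _) _
            _ = (ENNReal.ofReal Rx * ENNReal.ofReal (4^Qx) * (h+ε)^Qx * W) * (c⁻¹ * c) := by
                rw [div_eq_mul_inv]; ring
            _ = ENNReal.ofReal Rx * ENNReal.ofReal (4^Qx) * (h+ε)^Qx * W := by
                rw [ENNReal.inv_mul_cancel hc0 hctop, mul_one]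
        have h9 := (ENNReal.le_div_iff_mul_le (Or.inl hM0) (Or.inl hMtop)).2 hstep
        rwa [mul_div_assoc] at h9
    refine le_trans hmain ?_
    refine mul_le_mul_right ?_ _
    rw [hSupn]
    exact le_iSup₂ (f := fun (q : ℚ) (_ : 0 < (q:ℝ) ∧ (q:ℝ) < 1/((n:ℝ)+1)) =>
      ω (Metric.closedBall x (q:ℝ)) / μ (Metric.closedBall x (q:ℝ))) ρ hq
  -- take the infimum over n, for fixed ε
  have key2 : ∀ ε : ℝ≥0∞, ε ≠ 0 → ε ≠ ⊤ →
      elip f Ω x ^ Qx ≤ ENNReal.ofReal Rx * ENNReal.ofReal (4 ^ Qx) * (h + ε) ^ Qx * J := by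
    intro ε hε0 hεtop
    have hBne : ENNReal.ofReal Rx * ENNReal.ofReal (4^Qx) * (h+ε)^Qx ≠ 0 := by
      refine mul_ne_zero (mul_ne_zero hRne ?_) ?_
      · exact (ENNReal.ofReal_pos.2 (Real.rpow_pos_of_pos (by norm_num) _)).ne'
      · refine (ENNReal.rpow_pos ?_ ?_).ne'
        · exact lt_of_lt_of_le (lt_of_le_of_ne zero_le (Ne.symm hε0)) le_add_self
        · exact ENNReal.add_ne_top.2 ⟨hh, hεtop⟩
    have hBtop : ENNReal.ofReal Rx * ENNReal.ofReal (4^Qx) * (h+ε)^Qx ≠ ⊤ := by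
      refine ENNReal.mul_ne_top (ENNReal.mul_ne_top hRtop ENNReal.ofReal_ne_top) ?_
      exact ENNReal.rpow_ne_top_of_nonneg (le_of_lt hQx) (ENNReal.add_ne_top.2 ⟨hh, hεtop⟩)
    have h1 : elip f Ω x ^ Qx ≤ ⨅ n : ℕ,
        ENNReal.ofReal Rx * ENNReal.ofReal (4 ^ Qx) * (h + ε) ^ Qx * Supn n :=
      le_iInf (fun n => key ε hε0 hεtop n)
    rwa [← ENNReal.mul_iInf_of_ne hBne hBtop, ← hJdef] at h1
  -- let ε → 0
  have htend : Tendsto (fun m : ℕ =>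
      ENNReal.ofReal Rx * ENNReal.ofReal (4 ^ Qx) *
        (h + ENNReal.ofReal (1/((m:ℝ)+1))) ^ Qx * J) atTop
      (nhds (ENNReal.ofReal Rx * ENNReal.ofReal (4 ^ Qx) * h ^ Qx * J)) := by
    have t0 : Tendsto (fun m : ℕ => ENNReal.ofReal (1/((m:ℝ)+1))) atTop (nhds 0) := by
      have : Tendsto (fun n : ℕ => 1 / ((n:ℝ) + 1)) atTop (nhds 0) :=
        tendsto_one_div_add_atTop_nhds_zero_nat
      have h2 := (ENNReal.continuous_ofReal.tendsto 0).comp this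
      simpa [Function.comp_def] using h2
    have t1 : Tendsto (fun m : ℕ => h + ENNReal.ofReal (1/((m:ℝ)+1))) atTop (nhds h) := by
      have := Filter.Tendsto.add (tendsto_const_nhds (x := h)) t0
      simpa using this
    have t2 : Tendsto (fun m : ℕ => (h + ENNReal.ofReal (1/((m:ℝ)+1))) ^ Qx) atTop
        (nhds (h ^ Qx)) := (ENNReal.continuous_rpow_const.tendsto h).comp t1
    have t3 := ENNReal.Tendsto.mul_const t2 (Or.inr hJtop)
    have t4 := ENNReal.Tendsto.const_mul (a := ENNReal.ofReal Rx * ENNReal.ofReal (4 ^ Qx)) t3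
      (Or.inr (ENNReal.mul_ne_top hRtop ENNReal.ofReal_ne_top))
    have heq : ∀ m : ℕ, ENNReal.ofReal Rx * ENNReal.ofReal (4 ^ Qx) *
        ((h + ENNReal.ofReal (1/((m:ℝ)+1))) ^ Qx * J) =
        ENNReal.ofReal Rx * ENNReal.ofReal (4 ^ Qx) *
        (h + ENNReal.ofReal (1/((m:ℝ)+1))) ^ Qx * J := fun m => by ring
    have heq2 : ENNReal.ofReal Rx * ENNReal.ofReal (4 ^ Qx) * (h ^ Qx * J) =
        ENNReal.ofReal Rx * ENNReal.ofReal (4 ^ Qx) * h ^ Qx * J := by ring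
    rw [← heq2]
    exact t4.congr heq
  refine ge_of_tendsto htend ?_
  filter_upwards with m
  exact key2 _ (ENNReal.ofReal_pos.2 (by positivity)).ne' ENNReal.ofReal_ne_top


lemma young_step {A J : ℝ≥0∞} {Qx q : ℝ} (hq : 0 < q) (hqQ : q < Qx) (e : ℝ≥0∞)
    (h : e ^ Qx ≤ ENNReal.ofReal (4 ^ Qx) * A * J) :
    e ^ q ≤ ENNReal.ofReal (4 ^ q) *
      (ENNReal.ofReal ((Qx - q)/Qx) * A ^ (q/(Qx - q)) + J) := by
  have hQx0 : 0 < Qx := lt_trans hq hqQ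
  have hd0 : 0 < Qx - q := by linarith
  have h1 : e ^ q = (e ^ Qx) ^ (q / Qx) := by
    rw [← ENNReal.rpow_mul]
    congr 1
    field_simp
  have h4Q : (ENNReal.ofReal (4 ^ Qx)) ^ (q / Qx) = ENNReal.ofReal (4 ^ q) := by
    rw [← ENNReal.ofReal_rpow_of_pos (by norm_num : (0:ℝ) < 4), ← ENNReal.rpow_mul,
      show Qx * (q/Qx) = q by field_simp, ENNReal.ofReal_rpow_of_pos (by norm_num)]
  have hconj : Real.HolderConjugate (Qx/(Qx - q)) (Qx/q) := by
    rw [Real.holderConjugate_iff]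
    constructor
    · rw [lt_div_iff₀ hd0]
      linarith
    · rw [inv_div, inv_div]
      field_simp
      ring
  have hy := ENNReal.young_inequality (A ^ (q/Qx)) (J ^ (q/Qx)) hconj
  have hy1 : (A ^ (q/Qx)) ^ (Qx/(Qx - q)) = A ^ (q/(Qx - q)) := by
    rw [← ENNReal.rpow_mul]
    congr 1
    field_simp
  have hy2 : (J ^ (q/Qx)) ^ (Qx/q) = J := by
    rw [← ENNReal.rpow_mul]
    rw [show (q/Qx) * (Qx/q) = 1 by field_simp]
    exact ENNReal.rpow_one J
  have hy3 : A ^ (q/(Qx - q)) / ENNReal.ofReal (Qx/(Qx - q)) =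
      ENNReal.ofReal ((Qx - q)/Qx) * A ^ (q/(Qx - q)) := by
    rw [div_eq_mul_inv, ← ENNReal.ofReal_inv_of_pos (by positivity), mul_comm]
    congr 2
    rw [inv_div]
  have hy4 : J / ENNReal.ofReal (Qx/q) ≤ J := by
    rw [div_eq_mul_inv]
    calc J * (ENNReal.ofReal (Qx/q))⁻¹ ≤ J * 1 := by
          refine mul_le_mul_right ?_ _
          refine ENNReal.inv_le_one.2 ?_
          rw [ENNReal.one_le_ofReal]
          rw [le_div_iff₀ hq]
          linarith
      _ = J := mul_one J
  have hyoung : A ^ (q/Qx) * J ^ (q/Qx) ≤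
      ENNReal.ofReal ((Qx - q)/Qx) * A ^ (q/(Qx - q)) + J := by
    refine le_trans hy ?_
    rw [hy1, hy2, hy3]
    exact add_le_add_right hy4 _
  calc e ^ q = (e ^ Qx) ^ (q/Qx) := h1
    _ ≤ (ENNReal.ofReal (4 ^ Qx) * A * J) ^ (q/Qx) :=
        ENNReal.rpow_le_rpow h (by positivity)
    _ = (ENNReal.ofReal (4 ^ Qx)) ^ (q/Qx) * (A ^ (q/Qx) * J ^ (q/Qx)) := by
        rw [ENNReal.mul_rpow_of_nonneg _ _ (by positivity : (0:ℝ) ≤ q/Qx),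
          ENNReal.mul_rpow_of_nonneg _ _ (by positivity : (0:ℝ) ≤ q/Qx), mul_assoc]
    _ = ENNReal.ofReal (4 ^ q) * (A ^ (q/Qx) * J ^ (q/Qx)) := by rw [h4Q]
    _ ≤ ENNReal.ofReal (4 ^ q) *
        (ENNReal.ofReal ((Qx - q)/Qx) * A ^ (q/(Qx - q)) + J) := mul_le_mul_right hyoung _


lemma measure_le_pullback {X : Type*} [MetricSpace X] [MeasurableSpace X] [BorelSpace X]
    (μ ω μt : Measure X) [IsFiniteMeasure ω] (hle : ∀ S : Set X, μ S ≤ μt S)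
    (Ω : Set X) (hΩopen : IsOpen Ω) (hsep : IsSeparable Ω)
    (Cd : ℝ≥0) (hdbl : DoublingWithinC μt Cd Ω)
    (A : Set X) (hA : A ⊆ Ω) (t : ℝ≥0∞)
    (hfine : ∀ x ∈ A, ∃ᶠ r in nhdsWithin (0:ℝ) (Set.Ioi 0),
      t * μ (Metric.closedBall x r) ≤ ω (Metric.closedBall x r)) :
    t * μ A ≤ ω A := by
  by_contra hcon
  push_neg at hcon
  obtain ⟨U, hAU, hUopen, hUlt⟩ := Set.exists_isOpen_lt_of_lt A _ hcon
  exact absurd (vitali_cover_est μ ω μt hle Ω hΩopen hsep Cd hdbl A hA U hUopen hAU t hfine)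
    (not_le.2 hUlt)

end

/-- Proposition 5.3 (first part): `lip_f ∈ L^q(Ω ∖ E, μ)`. -/
theorem lip_in_Lq
    {X Y : Type*} [MetricSpace X] [MeasurableSpace X] [BorelSpace X]
    [ConnectedSpace X] [Nontrivial X]
    [MetricSpace Y] [MeasurableSpace Y] [BorelSpace Y] [TopologicalSpace.SeparableSpace Y]
    (μ : Measure X) (ν : Measure Y)
    (hμball : ∀ (x : X) (r : ℝ), μ (Metric.ball x r) < ⊤)
    (hνball : ∀ (y : Y) (r : ℝ), ν (Metric.ball y r) < ⊤)
    (Ω : Set X) (hΩopen : IsOpen Ω) (hΩbdd : Bornology.IsBounded Ω)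
    (f : X → Y) (hf : IsHomeoOn f Ω) (hfΩopen : IsOpen (f '' Ω))
    (hνfΩ : ν (f '' Ω) < ⊤)
    (μt : Measure X) (hle : ∀ S : Set X, μ S ≤ μt S) (hdbl : DoublingWithin μt Ω)
    (E : Set X) (hEΩ : E ⊆ Ω) (hEmeas : MeasurableSet E)
    (Qf Rf : X → ℝ) (hQmeas : Measurable Qf) (hRmeas : Measurable Rf)
    (hQ1 : ∀ x ∈ Ω \ E, 1 < Qf x) (hR0 : ∀ x ∈ Ω \ E, 0 < Rf x)
    (hae : ∀ᵐ x ∂μ.restrict (Ω \ E),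
      Filter.limsup (fun r : ℝ => μ (Metric.ball x r) / ENNReal.ofReal (r ^ Qf x))
          (nhdsWithin 0 (Set.Ioi 0))
        < ENNReal.ofReal (Rf x) *
          Filter.liminf (fun r : ℝ => ν (Metric.ball (f x) r) / ENNReal.ofReal (r ^ Qf x))
            (nhdsWithin 0 (Set.Ioi 0)))
    (Q : ℝ) (hQgt : 1 < Q) (hQinf : ∀ x ∈ Ω \ E, Q ≤ Qf x)
    (q : ℝ) (hq1 : 1 ≤ q) (hqQ : q ≤ Q)
    (hint :
      (q < Q ∧
        ∫⁻ x in Ω \ E,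
          ENNReal.ofReal ((Qf x - q) / Qf x) *
            (ENNReal.ofReal (Rf x) * hDil f Ω x ^ Qf x) ^ (q / (Qf x - q)) ∂μ < ⊤) ∨
      (q = Q ∧ ∃ C : ℝ≥0∞, C < ⊤ ∧
        ∀ᵐ x ∂μ.restrict (Ω \ E), ENNReal.ofReal (Rf x ^ (1 / Qf x)) * hDil f Ω x ≤ C)) :
    ∫⁻ x in Ω \ E, elip f Ω x ^ q ∂μ < ⊤ := by
    classical
  obtain ⟨ω, hω⟩ := exists_pullback_measure ν f Ω hf hfΩopen
  have hωuniv : ω Set.univ = ν (f '' Ω) := by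
    rw [hω _ MeasurableSet.univ, Set.univ_inter]
  haveI : IsFiniteMeasure ω := ⟨by rw [hωuniv]; exact hνfΩ⟩
  have hsep : IsSeparable Ω := sep_of_homeo f Ω hf
  obtain ⟨Cd, hdblC⟩ := hdbl
  set S : Set X := Ω \ E with hSdef
  have hSmeas : MeasurableSet S := hΩopen.measurableSet.diff hEmeas
  have hSsub : S ⊆ Ω := Set.diff_subset
  have hμcb : ∀ (x : X) (r : ℝ), μ (Metric.closedBall x r) < ⊤ := fun x r =>
    lt_of_le_of_lt (measure_mono (Metric.closedBall_subset_ball (lt_add_one r))) (hμball x (r+1))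
  have hωcb : ∀ (x : X) (r : ℝ), ω (Metric.closedBall x r) < ⊤ := fun x r => measure_lt_top ω _
  obtain ⟨x₀⟩ : Nonempty X := inferInstance
  obtain ⟨ρΩ, hρΩ⟩ := (Metric.isBounded_iff_subset_closedBall x₀).1 hΩbdd
  have hμΩfin : μ Ω < ⊤ := lt_of_le_of_lt (measure_mono hρΩ) (hμcb x₀ ρΩ)
  have hμSfin : μ S < ⊤ := lt_of_le_of_lt (measure_mono hSsub) hμΩfin
  -- the density quotient function
  set J : X → ℝ≥0∞ := fun x => ⨅ n : ℕ, ⨆ (qq : ℚ) (_ : 0 < (qq:ℝ) ∧ (qq:ℝ) < 1/((n:ℝ)+1)),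
      ω (Metric.closedBall x (qq:ℝ)) / μ (Metric.closedBall x (qq:ℝ)) with hJ
  have hJx : ∀ x : X, J x = ⨅ n : ℕ, ⨆ (qq : ℚ) (_ : 0 < (qq:ℝ) ∧ (qq:ℝ) < 1/((n:ℝ)+1)),
      ω (Metric.closedBall x (qq:ℝ)) / μ (Metric.closedBall x (qq:ℝ)) := fun x => by rw [hJ]
  have hJmeas : Measurable J := by
    refine Measurable.iInf (fun n => ?_)
    refine Measurable.iSup (fun qq => ?_)
    refine Measurable.iSup_Prop _ ?_
    exact (usc_measure_closedBall ω _ hωcb).div (usc_measure_closedBall μ _ hμcb)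
  -- weak-type covering estimate
  have hweak : ∀ A : Set X, A ⊆ Ω → ∀ t : ℝ≥0∞, (∀ x ∈ A, t < J x) → t * μ A ≤ ω A := by
    intro A hAΩ t hAt
    refine measure_le_pullback μ ω μt hle Ω hΩopen hsep Cd hdblC A hAΩ t ?_
    intro x hxA
    rw [Filter.frequently_iff]
    intro U hU
    obtain ⟨δ, hδpos, hδsub⟩ := (nhdsGT_basis (0:ℝ)).mem_iff.1 hU
    obtain ⟨n, hn⟩ := exists_nat_one_div_lt hδpos
    have h3 : t < ⨆ (qq : ℚ) (_ : 0 < (qq:ℝ) ∧ (qq:ℝ) < 1/((n:ℝ)+1)),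
        ω (Metric.closedBall x (qq:ℝ)) / μ (Metric.closedBall x (qq:ℝ)) := by
      refine lt_of_lt_of_le (hAt x hxA) ?_
      rw [hJx x]
      exact iInf_le _ n
    rw [lt_iSup_iff] at h3
    obtain ⟨qq, h4⟩ := h3
    rw [lt_iSup_iff] at h4
    obtain ⟨hqq, h5⟩ := h4
    refine ⟨(qq:ℝ), hδsub ⟨hqq.1, lt_trans hqq.2 hn⟩, ?_⟩
    rcases eq_or_ne (μ (Metric.closedBall x (qq:ℝ))) 0 with h6 | h6
    · rw [h6, mul_zero]; exact zero_le
    · rw [ENNReal.lt_div_iff_mul_lt (Or.inl h6) (Or.inl (hμcb x _).ne)] at h5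
      exact le_of_lt h5
  have hωle : ∀ A : Set X, ω A ≤ ν (f '' Ω) := fun A => by
    rw [← hωuniv]; exact measure_mono (Set.subset_univ A)
  -- the set where J = ⊤ is null
  have hJtop_null : μ (S ∩ J ⁻¹' {⊤}) = 0 := by
    set A := S ∩ J ⁻¹' {⊤} with hA
    have hAΩ : A ⊆ Ω := fun x hx => hSsub hx.1
    by_contra h0
    have hAfin : μ A ≠ ⊤ := (lt_of_le_of_lt (measure_mono hAΩ) hμΩfin).ne
    have hfin : ω A / μ A ≠ ⊤ :=
      (ENNReal.div_lt_top (ne_top_of_le_ne_top hνfΩ.ne (hωle A)) h0).ne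
    obtain ⟨n, hn⟩ := ENNReal.exists_nat_gt hfin
    have hwk := hweak A hAΩ (n : ℝ≥0∞) (fun x hx => by
      have : J x = ⊤ := hx.2
      rw [this]
      exact ENNReal.natCast_lt_top n)
    rw [ENNReal.div_lt_iff (Or.inl h0) (Or.inl hAfin)] at hn
    exact absurd hwk (not_le.2 hn)
  -- bound the integral of J over S
  have hJint : ∫⁻ x in S, J x ∂μ ≤ 2 * ν (f '' Ω) := by
    set L : ℤ → Set X := fun k => S ∩ J ⁻¹' (Set.Ioc ((2:ℝ≥0∞)^k) (2^(k+1))) with hL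
    have hLmeas : ∀ k, MeasurableSet (L k) := fun k =>
      hSmeas.inter (hJmeas measurableSet_Ioc)
    have hLdisj : Pairwise (Function.onFun Disjoint L) := by
      intro k k' hkk'
      rw [Function.onFun, Set.disjoint_left]
      rintro x ⟨hxS1, hx1⟩ ⟨hxS2, hx2⟩
      rcases lt_or_gt_of_ne hkk' with hlt | hlt
      · have h1 : (2:ℝ≥0∞)^(k+1) ≤ 2^k' :=
          ENNReal.zpow_le_of_le (by norm_num) (by omega)
        exact absurd (lt_of_le_of_lt (hx1.2.trans h1) hx2.1) (lt_irrefl _)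
      · have h1 : (2:ℝ≥0∞)^(k'+1) ≤ 2^k :=
          ENNReal.zpow_le_of_le (by norm_num) (by omega)
        exact absurd (lt_of_le_of_lt (hx2.2.trans h1) hx1.1) (lt_irrefl _)
    have hcov : S ⊆ (S ∩ J ⁻¹' {0}) ∪ ((S ∩ J ⁻¹' {⊤}) ∪ ⋃ k : ℤ, L k) := by
      intro x hx
      rcases eq_or_ne (J x) 0 with h0 | h0
      · exact Or.inl ⟨hx, h0⟩
      rcases eq_or_ne (J x) ⊤ with htop | htop
      · exact Or.inr (Or.inl ⟨hx, htop⟩)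
      obtain ⟨k, hk⟩ := ENNReal.exists_mem_Ioc_zpow h0 htop (by norm_num : (1:ℝ≥0∞) < 2)
        (by norm_num)
      exact Or.inr (Or.inr (Set.mem_iUnion.2 ⟨k, hx, hk⟩))
    calc ∫⁻ x in S, J x ∂μ
        ≤ ∫⁻ x in (S ∩ J ⁻¹' {0}) ∪ ((S ∩ J ⁻¹' {⊤}) ∪ ⋃ k : ℤ, L k), J x ∂μ :=
          lintegral_mono' (Measure.restrict_mono hcov le_rfl) le_rfl
      _ ≤ ∫⁻ x in S ∩ J ⁻¹' {0}, J x ∂μ +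
          (∫⁻ x in S ∩ J ⁻¹' {⊤}, J x ∂μ + ∫⁻ x in ⋃ k : ℤ, L k, J x ∂μ) := by
          refine le_trans (lintegral_mono' (Measure.restrict_union_le _ _) le_rfl) ?_
          rw [lintegral_add_measure]
          refine add_le_add_right ?_ _
          refine le_trans (lintegral_mono' (Measure.restrict_union_le _ _) le_rfl) ?_
          rw [lintegral_add_measure]
      _ ≤ 0 + (0 + ∑' k : ℤ, ∫⁻ x in L k, J x ∂μ) := by
          refine add_le_add ?_ (add_le_add ?_ ?_)
          · refine le_of_eq ?_
            rw [setLIntegral_congr_fun_ae (hSmeas.inter (hJmeas (measurableSet_singleton _)))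
              (ae_of_all _ (fun x hx => hx.2)), lintegral_zero]
          · rw [Measure.restrict_eq_zero.2 hJtop_null, lintegral_zero_measure]
          · exact lintegral_iUnion_le _ _
      _ ≤ ∑' k : ℤ, 2 * ω (L k) := by
          rw [zero_add, zero_add]
          refine ENNReal.tsum_le_tsum (fun k => ?_)
          have hb1 : ∫⁻ x in L k, J x ∂μ ≤ ∫⁻ _ in L k, (2:ℝ≥0∞)^(k+1) ∂μ := by
            refine lintegral_mono_ae ?_
            refine (ae_restrict_iff' (hLmeas k)).2 (ae_of_all _ (fun x hx => hx.2.2))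
          refine le_trans hb1 ?_
          rw [setLIntegral_const]
          have hzp : (2:ℝ≥0∞)^(k+1) = 2 * 2^k := by
            have h2 : (2:ℝ≥0∞) = ((2:ℝ≥0):ℝ≥0∞) := by norm_num
            rw [h2, ← ENNReal.coe_zpow (by norm_num : (2:ℝ≥0) ≠ 0),
              ← ENNReal.coe_zpow (by norm_num : (2:ℝ≥0) ≠ 0), ← ENNReal.coe_mul]
            congr 1
            rw [zpow_add_one₀ (by norm_num : (2:ℝ≥0) ≠ 0)]
            ring
          rw [hzp, mul_assoc]
          refine mul_le_mul_right ?_ _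
          exact hweak (L k) (fun x hx => hSsub hx.1) _ (fun x hx => hx.2.1)
      _ = 2 * ∑' k : ℤ, ω (L k) := ENNReal.tsum_mul_left
      _ = 2 * ω (⋃ k : ℤ, L k) := by rw [measure_iUnion hLdisj hLmeas]
      _ ≤ 2 * ν (f '' Ω) := mul_le_mul_right (hωle _) _
  have hJint_fin : ∫⁻ x in S, J x ∂μ < ⊤ :=
    lt_of_le_of_lt hJint (ENNReal.mul_lt_top (by norm_num) hνfΩ)
  -- almost everywhere, J is finite on S
  have haeJ : ∀ᵐ x ∂μ.restrict S, J x ≠ ⊤ := by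
    refine (ae_restrict_iff' hSmeas).2 ?_
    rw [ae_iff]
    refine measure_mono_null ?_ hJtop_null
    intro x hx
    simp only [Set.mem_setOf_eq, Classical.not_imp, not_not] at hx
    exact ⟨hx.1, hx.2⟩
  rcases hint with ⟨hqQ', hint1⟩ | ⟨hqQ', hint2⟩
  · -- case q < Q
    have hptwise : ∀ᵐ x ∂μ.restrict S, elip f Ω x ^ q ≤
        ENNReal.ofReal (4 ^ Q) * ((ENNReal.ofReal ((Qf x - q)/(Qf x)) *
          (ENNReal.ofReal (Rf x) * hDil f Ω x ^ Qf x) ^ (q/(Qf x - q))) + J x) := by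
      filter_upwards [ae_restrict_mem hSmeas, hae, haeJ] with x hxS hxae hxJ
      have hxΩ : x ∈ Ω := hSsub hxS
      have hQfx : 1 < Qf x := hQ1 x hxS
      have hQfx0 : 0 < Qf x := lt_trans zero_lt_one hQfx
      have hRfx : 0 < Rf x := hR0 x hxS
      have hQle : Q ≤ Qf x := hQinf x hxS
      have hq0 : 0 < q := lt_of_lt_of_le zero_lt_one hq1
      have hqlt : q < Qf x := lt_of_lt_of_le hqQ' hQle
      have hcoefpos : 0 < (Qf x - q)/(Qf x) := div_pos (by linarith) hQfx0
      have h4Qne : ENNReal.ofReal (4 ^ Q) ≠ 0 :=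
        (ENNReal.ofReal_pos.2 (Real.rpow_pos_of_pos (by norm_num) _)).ne'
      rcases eq_or_ne (hDil f Ω x) ⊤ with hht | hht
      · have hG : ENNReal.ofReal ((Qf x - q)/(Qf x)) *
            (ENNReal.ofReal (Rf x) * hDil f Ω x ^ Qf x) ^ (q/(Qf x - q)) = ⊤ := by
          rw [hht, ENNReal.top_rpow_of_pos hQfx0,
            ENNReal.mul_top (ENNReal.ofReal_pos.2 hRfx).ne',
            ENNReal.top_rpow_of_pos (div_pos hq0 (by linarith)),
            ENNReal.mul_top (ENNReal.ofReal_pos.2 hcoefpos).ne']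
        rw [hG, top_add, ENNReal.mul_top h4Qne]
        exact le_top
      · have hest := pointwise_est μ ω ν Ω hΩopen f hf.1 hfΩopen hω hxΩ hQfx0 hRfx hxae hht
          (J x) hxJ (hJx x)
        have hest' : elip f Ω x ^ Qf x ≤ ENNReal.ofReal (4 ^ Qf x) *
            (ENNReal.ofReal (Rf x) * hDil f Ω x ^ Qf x) * J x := by
          refine le_trans hest (le_of_eq ?_)
          ring
        have hY := young_step hq0 hqlt _ hest'
        refine le_trans hY ?_
        refine mul_le_mul_left ?_ _
        exact ENNReal.ofReal_le_ofReal
          (Real.rpow_le_rpow_of_exponent_le (by norm_num) (le_of_lt hqQ'))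
    calc ∫⁻ x in S, elip f Ω x ^ q ∂μ
        ≤ ∫⁻ x in S, ENNReal.ofReal (4 ^ Q) * ((ENNReal.ofReal ((Qf x - q)/(Qf x)) *
            (ENNReal.ofReal (Rf x) * hDil f Ω x ^ Qf x) ^ (q/(Qf x - q))) + J x) ∂μ :=
          lintegral_mono_ae hptwise
      _ = ENNReal.ofReal (4 ^ Q) * ∫⁻ x in S, ((ENNReal.ofReal ((Qf x - q)/(Qf x)) *
            (ENNReal.ofReal (Rf x) * hDil f Ω x ^ Qf x) ^ (q/(Qf x - q))) + J x) ∂μ :=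
          lintegral_const_mul' _ _ ENNReal.ofReal_ne_top
      _ = ENNReal.ofReal (4 ^ Q) * (∫⁻ x in S, (ENNReal.ofReal ((Qf x - q)/(Qf x)) *
            (ENNReal.ofReal (Rf x) * hDil f Ω x ^ Qf x) ^ (q/(Qf x - q))) ∂μ +
            ∫⁻ x in S, J x ∂μ) := by
          rw [lintegral_add_right' _ hJmeas.aemeasurable]
      _ < ⊤ := by
          refine ENNReal.mul_lt_top ENNReal.ofReal_lt_top ?_
          exact ENNReal.add_lt_top.2 ⟨hint1, hJint_fin⟩
  · -- case q = Q
    obtain ⟨C, hCfin, hCae⟩ := hint2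
    subst hqQ'
    have hq0 : 0 < q := lt_of_lt_of_le zero_lt_one hq1
    have hCq_ne : ENNReal.ofReal (4 ^ q) * C ^ q ≠ ⊤ :=
      ENNReal.mul_ne_top ENNReal.ofReal_ne_top
        (ENNReal.rpow_ne_top_of_nonneg (le_of_lt hq0) hCfin.ne)
    have hptwise : ∀ᵐ x ∂μ.restrict S, elip f Ω x ^ q ≤
        ENNReal.ofReal (4 ^ q) * C ^ q * (1 + J x) := by
      filter_upwards [ae_restrict_mem hSmeas, hae, haeJ, hCae] with x hxS hxae hxJ hxC
      have hxΩ : x ∈ Ω := hSsub hxS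
      have hQfx : 1 < Qf x := hQ1 x hxS
      have hQfx0 : 0 < Qf x := lt_trans zero_lt_one hQfx
      have hRfx : 0 < Rf x := hR0 x hxS
      have hQle : q ≤ Qf x := hQinf x hxS
      have hRpow : 0 < Rf x ^ (1/Qf x) := Real.rpow_pos_of_pos hRfx _
      have hht : hDil f Ω x ≠ ⊤ := by
        intro h0
        rw [h0, ENNReal.mul_top (ENNReal.ofReal_pos.2 hRpow).ne'] at hxC
        exact absurd (top_le_iff.1 hxC) hCfin.ne
      have hest := pointwise_est μ ω ν Ω hΩopen f hf.1 hfΩopen hω hxΩ hQfx0 hRfx hxae hht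
        (J x) hxJ (hJx x)
      have hθ0 : 0 < q / Qf x := div_pos hq0 hQfx0
      have hθ1 : q / Qf x ≤ 1 := (div_le_one hQfx0).2 hQle
      have hexp : elip f Ω x ^ q = (elip f Ω x ^ Qf x) ^ (q / Qf x) := by
        rw [← ENNReal.rpow_mul]
        congr 1
        field_simp
      have e1 : (ENNReal.ofReal (Rf x) * ENNReal.ofReal (4 ^ Qf x) * hDil f Ω x ^ Qf x * J x)
          ^ (q / Qf x) = ENNReal.ofReal (4 ^ q) *
          ((ENNReal.ofReal (Rf x ^ (1/Qf x)) * hDil f Ω x) ^ q * J x ^ (q / Qf x)) := by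
        rw [ENNReal.mul_rpow_of_nonneg _ _ (le_of_lt hθ0),
          ENNReal.mul_rpow_of_nonneg _ _ (le_of_lt hθ0),
          ENNReal.mul_rpow_of_nonneg _ _ (le_of_lt hθ0),
          ENNReal.mul_rpow_of_nonneg _ _ (le_of_lt hq0)]
        have e2 : (ENNReal.ofReal (4 ^ Qf x)) ^ (q / Qf x) = ENNReal.ofReal (4 ^ q) := by
          rw [← ENNReal.ofReal_rpow_of_pos (by norm_num : (0:ℝ) < 4), ← ENNReal.rpow_mul,
            show Qf x * (q/Qf x) = q by field_simp, ENNReal.ofReal_rpow_of_pos (by norm_num)]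
        have e3 : (ENNReal.ofReal (Rf x)) ^ (q / Qf x) =
            (ENNReal.ofReal (Rf x ^ (1/Qf x))) ^ q := by
          rw [← ENNReal.ofReal_rpow_of_pos hRfx, ← ENNReal.rpow_mul]
          congr 1
          field_simp
        have e4 : (hDil f Ω x ^ Qf x) ^ (q / Qf x) = hDil f Ω x ^ q := by
          rw [← ENNReal.rpow_mul]
          congr 1
          field_simp
        rw [e2, e3, e4]
        ring
      have e5 : (ENNReal.ofReal (Rf x ^ (1/Qf x)) * hDil f Ω x) ^ q ≤ C ^ q :=
        ENNReal.rpow_le_rpow hxC (le_of_lt hq0)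
      have e6 : J x ^ (q / Qf x) ≤ 1 + J x := by
        rcases le_total (J x) 1 with hj | hj
        · exact le_trans (ENNReal.rpow_le_one hj (le_of_lt hθ0)) le_self_add
        · calc J x ^ (q / Qf x) ≤ J x ^ (1:ℝ) :=
              ENNReal.rpow_le_rpow_of_exponent_le hj hθ1
            _ = J x := ENNReal.rpow_one _
            _ ≤ 1 + J x := le_add_self
      calc elip f Ω x ^ q = (elip f Ω x ^ Qf x) ^ (q / Qf x) := hexp
        _ ≤ (ENNReal.ofReal (Rf x) * ENNReal.ofReal (4 ^ Qf x) * hDil f Ω x ^ Qf x * J x)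
            ^ (q / Qf x) := ENNReal.rpow_le_rpow hest (le_of_lt hθ0)
        _ = ENNReal.ofReal (4 ^ q) *
            ((ENNReal.ofReal (Rf x ^ (1/Qf x)) * hDil f Ω x) ^ q * J x ^ (q / Qf x)) := e1
        _ ≤ ENNReal.ofReal (4 ^ q) * (C ^ q * (1 + J x)) :=
            mul_le_mul_right (mul_le_mul' e5 e6) _
        _ = ENNReal.ofReal (4 ^ q) * C ^ q * (1 + J x) := by ring
    calc ∫⁻ x in S, elip f Ω x ^ q ∂μ
        ≤ ∫⁻ x in S, ENNReal.ofReal (4 ^ q) * C ^ q * (1 + J x) ∂μ :=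
          lintegral_mono_ae hptwise
      _ = ENNReal.ofReal (4 ^ q) * C ^ q * ∫⁻ x in S, (1 + J x) ∂μ :=
          lintegral_const_mul' _ _ hCq_ne
      _ = ENNReal.ofReal (4 ^ q) * C ^ q * (μ S + ∫⁻ x in S, J x ∂μ) := by
          rw [lintegral_add_right' _ hJmeas.aemeasurable, setLIntegral_one]
      _ < ⊤ := by
          refine ENNReal.mul_lt_top (lt_top_iff_ne_top.2 hCq_ne) ?_
          exact ENNReal.add_lt_top.2 ⟨hμSfin, hJint_fin⟩
end
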